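/- arXiv:2307.07967 — 9 statements merged into one kernel-verified Lean document; each statement's English description precedes it below -/
import Mathlib

section
/- Let λ ∈ ℂ, λ ≠ 0, and n ≥ 1. Let Ω(λ,n) be the n×n matrix with entries x_{i,j} given by: x_{i,j} = 0 if i > j; x_{i,n} = 0 for i ≠ n; x_{n,n} = 1; x_{i,i} = (−1)^{n−i} λ^{−2(n−i)}; and x_{i,j} = (−1)^{n−i} C(n−i−1, j−i) λ^{−2n+i+j} for i < j, j ≠ n, where C denotes the binomial coefficient. Then Ω(λ,n)·J(λ⁻¹,n) = (J(λ,n))⁻¹·Ω(λ,n). -/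
/-- The Jordan block `J(λ, m)`. -/
noncomputable def jordanBlock (lam : ℂ) (m : ℕ) : Matrix (Fin m) (Fin m) ℂ :=
  Matrix.of fun i j => if (j : ℕ) = (i : ℕ) then lam
    else if (j : ℕ) = (i : ℕ) + 1 then 1 else 0

/-- The matrix `Ω(λ, n)` (indices `1, …, n` in the paper correspond to `0, …, n-1` here):
`x_{i,j} = 0` for `i > j`; `x_{i,n} = 0` for `i ≠ n`; `x_{n,n} = 1`;
`x_{i,i} = (-1)^{n-i} λ^{-2(n-i)}`; and
`x_{i,j} = (-1)^{n-i} C(n-i-1, j-i) λ^{-2n+i+j}` for `i < j`, `j ≠ n`. -/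
noncomputable def Omega (lam : ℂ) (n : ℕ) : Matrix (Fin n) (Fin n) ℂ :=
  Matrix.of fun i j =>
    if (j : ℕ) < (i : ℕ) then 0
    else if i = j then (-1 : ℂ) ^ (n - 1 - (i : ℕ)) * lam ^ (-(2 * ((n : ℤ) - 1 - (i : ℕ))))
    else if (j : ℕ) = n - 1 then 0
    else (-1 : ℂ) ^ (n - 1 - (i : ℕ)) * ((n - 2 - (i : ℕ)).choose ((j : ℕ) - (i : ℕ))) *
      lam ^ ((i : ℤ) + (j : ℕ) + 2 - 2 * n)


lemma mul_jordan_apply {n : ℕ} (lam : ℂ) (A : Matrix (Fin n) (Fin n) ℂ) (i j : Fin n) :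
    (A * jordanBlock lam n) i j
      = A i j * lam + (if h : 0 < (j : ℕ) then A i ⟨(j : ℕ) - 1, by omega⟩ else 0) := by
  rw [Matrix.mul_apply]
  have hterm : ∀ k : Fin n, A i k * jordanBlock lam n k j
      = (if k = j then A i k * lam else 0) + (if (j : ℕ) = (k : ℕ) + 1 then A i k else 0) := by
    intro k
    simp only [jordanBlock, Matrix.of_apply]
    by_cases h1 : (j : ℕ) = (k : ℕ)
    · have hk : k = j := Fin.ext h1.symm
      subst hk
      simp [h1]
    · have hk : ¬ k = j := fun h => h1 (by rw [h])
      by_cases h2 : (j : ℕ) = (k : ℕ) + 1 <;> simp [h1, h2, hk]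
  simp only [hterm, Finset.sum_add_distrib]
  rw [Finset.sum_ite_eq' Finset.univ j (fun k => A i k * lam)]
  simp only [Finset.mem_univ, if_true]
  congr 1
  by_cases hj : 0 < (j : ℕ)
  · rw [dif_pos hj]
    have hcond : ∀ k : Fin n, ((j : ℕ) = (k : ℕ) + 1) ↔ (k = ⟨(j : ℕ) - 1, by omega⟩) := by
      intro k
      constructor
      · intro h; exact Fin.ext (by simp; omega)
      · intro h; subst h; simp; omega
    simp only [hcond]
    rw [Finset.sum_ite_eq' Finset.univ _ (fun k => A i k)]
    simp
  · rw [dif_neg hj]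
    apply Finset.sum_eq_zero
    intro k _
    rw [if_neg]; omega

lemma jordan_mul_apply {n : ℕ} (lam : ℂ) (A : Matrix (Fin n) (Fin n) ℂ) (i j : Fin n) :
    (jordanBlock lam n * A) i j
      = lam * A i j + (if h : (i : ℕ) + 1 < n then A ⟨(i : ℕ) + 1, h⟩ j else 0) := by
  rw [Matrix.mul_apply]
  have hterm : ∀ k : Fin n, jordanBlock lam n i k * A k j
      = (if k = i then lam * A k j else 0) + (if (k : ℕ) = (i : ℕ) + 1 then A k j else 0) := by
    intro k
    simp only [jordanBlock, Matrix.of_apply]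
    by_cases h1 : (k : ℕ) = (i : ℕ)
    · have hk : k = i := Fin.ext h1
      subst hk
      simp [h1]
    · have hk : ¬ k = i := fun h => h1 (by rw [h])
      by_cases h2 : (k : ℕ) = (i : ℕ) + 1 <;> simp [h1, h2, hk]
  simp only [hterm, Finset.sum_add_distrib]
  rw [Finset.sum_ite_eq' Finset.univ i (fun k => lam * A k j)]
  simp only [Finset.mem_univ, if_true]
  congr 1
  by_cases hi : (i : ℕ) + 1 < n
  · rw [dif_pos hi]
    have hcond : ∀ k : Fin n, ((k : ℕ) = (i : ℕ) + 1) ↔ (k = ⟨(i : ℕ) + 1, hi⟩) := by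
      intro k
      constructor
      · intro h; exact Fin.ext (by simpa using h)
      · intro h; subst h; simp
    simp only [hcond]
    rw [Finset.sum_ite_eq' Finset.univ _ (fun k => A k j)]
    simp
  · rw [dif_neg hi]
    apply Finset.sum_eq_zero
    intro k _
    rw [if_neg]; omega

lemma omega_lower {n : ℕ} (lam : ℂ) (i j : Fin n) (h : (j : ℕ) < (i : ℕ)) :
    Omega lam n i j = 0 := by
  simp only [Omega, Matrix.of_apply]
  rw [if_pos h]

lemma omega_lastcol {n : ℕ} (lam : ℂ) (i j : Fin n) (h : (i : ℕ) < (j : ℕ))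
    (hj : (j : ℕ) = n - 1) : Omega lam n i j = 0 := by
  have h1 : ¬ ((j : ℕ) < (i : ℕ)) := by omega
  have h2 : ¬ i = j := fun he => by rw [he] at h; omega
  simp only [Omega, Matrix.of_apply]
  rw [if_neg h1, if_neg h2, if_pos hj]

lemma omega_formula {n : ℕ} (lam : ℂ) (i j : Fin n) (hij : (i : ℕ) ≤ (j : ℕ))
    (hj : (j : ℕ) < n - 1) :
    Omega lam n i j = (-1 : ℂ) ^ (n - 1 - (i : ℕ)) * ((n - 2 - (i : ℕ)).choose ((j : ℕ) - (i : ℕ))) *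
      lam ^ ((i : ℤ) + (j : ℕ) + 2 - 2 * n) := by
  have h1 : ¬ ((j : ℕ) < (i : ℕ)) := by omega
  simp only [Omega, Matrix.of_apply]
  rw [if_neg h1]
  by_cases hd : i = j
  · subst hd
    rw [if_pos rfl]
    have hch : (n - 2 - (i : ℕ)).choose ((i : ℕ) - (i : ℕ)) = 1 := by simp
    have hexp : (-(2 * ((n : ℤ) - 1 - (i : ℕ)))) = ((i : ℤ) + (i : ℕ) + 2 - 2 * n) := by omega
    rw [hch, hexp]
    ring
  · have hjn : ¬ ((j : ℕ) = n - 1) := by omega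
    rw [if_neg hd, if_neg hjn]

lemma omega_diag {n : ℕ} (lam : ℂ) (i : Fin n) :
    Omega lam n i i = (-1 : ℂ) ^ (n - 1 - (i : ℕ)) * lam ^ (-(2 * ((n : ℤ) - 1 - (i : ℕ)))) := by
  simp only [Omega, Matrix.of_apply]
  rw [if_neg (by omega : ¬ ((i:ℕ) < (i:ℕ)))]; simp

lemma collect2 {lam : ℂ} (hlam : lam ≠ 0) (k : ℕ) (a c : ℤ) (hac : a + 1 = c) :
    lam * ((-1 : ℂ) ^ (k + 1) * ((1 : ℕ) : ℂ) * lam ^ a)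
      + (0 * lam⁻¹ + (-1 : ℂ) ^ k * ((1 : ℕ) : ℂ) * lam ^ c) = 0 := by
  have h1 : lam ^ c = lam ^ a * lam := by rw [← zpow_add_one₀ hlam, hac]
  rw [h1, pow_succ]
  push_cast
  ring

lemma collect3 {lam : ℂ} (hlam : lam ≠ 0) (k p q : ℕ) (a b c : ℤ)
    (hac : a + 1 = c) (hbc : b - 1 = c) :
    lam * ((-1 : ℂ) ^ (k + 1) * (((p + 1).choose (q + 1) : ℕ) : ℂ) * lam ^ a)
      + ((-1 : ℂ) ^ k * ((p.choose (q + 1) : ℕ) : ℂ) * lam ^ b * lam⁻¹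
        + (-1 : ℂ) ^ k * ((p.choose q : ℕ) : ℂ) * lam ^ c) = 0 := by
  have h1 : lam ^ c = lam ^ a * lam := by rw [← zpow_add_one₀ hlam, hac]
  have h2 : lam ^ b * lam⁻¹ = lam ^ c := by rw [← zpow_sub_one₀ hlam, hbc]
  rw [show (-1 : ℂ) ^ k * ((p.choose (q + 1) : ℕ) : ℂ) * lam ^ b * lam⁻¹
      = (-1 : ℂ) ^ k * ((p.choose (q + 1) : ℕ) : ℂ) * lam ^ c by rw [mul_assoc, h2],
    h1, pow_succ, Nat.choose_succ_succ]
  push_cast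
  ring

lemma collectd {lam : ℂ} (hlam : lam ≠ 0) (k : ℕ) (a b : ℤ) (hab : a + 1 = b - 1) :
    lam * ((-1 : ℂ) ^ (k + 1) * lam ^ a)
      + ((-1 : ℂ) ^ k * lam ^ b * lam⁻¹ + 0) = 0 := by
  have h2 : lam ^ b * lam⁻¹ = lam ^ a * lam := by
    rw [← zpow_sub_one₀ hlam, ← zpow_add_one₀ hlam, hab]
  rw [show (-1 : ℂ) ^ k * lam ^ b * lam⁻¹ = (-1 : ℂ) ^ k * (lam ^ a * lam) by
      rw [mul_assoc, h2], pow_succ]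
  ring

lemma bracket {n : ℕ} {lam : ℂ} (hlam : lam ≠ 0) (i j : Fin n) :
    lam * (if h : 0 < (j : ℕ) then Omega lam n i ⟨(j : ℕ) - 1, by omega⟩ else 0)
      + (if h : (i : ℕ) + 1 < n then
          Omega lam n ⟨(i : ℕ) + 1, h⟩ j * lam⁻¹
            + (if h' : 0 < (j : ℕ) then
                Omega lam n ⟨(i : ℕ) + 1, h⟩ ⟨(j : ℕ) - 1, by omega⟩ else 0)
        else 0) = 0 := by
  by_cases hi : (i : ℕ) + 1 < n
  · rw [dif_pos hi]
    by_cases hj : 0 < (j : ℕ)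
    · rw [dif_pos hj, dif_pos hj]
      rcases lt_trichotomy ((j : ℕ)) ((i : ℕ) + 1) with hcase | hcase | hcase
      · -- j ≤ i : everything below the diagonal
        rw [omega_lower lam i ⟨(j : ℕ) - 1, by omega⟩ (by simp only [Fin.val_mk]; omega),
          omega_lower lam ⟨(i : ℕ) + 1, hi⟩ j (by simp only [Fin.val_mk]; omega),
          omega_lower lam ⟨(i : ℕ) + 1, hi⟩ ⟨(j : ℕ) - 1, by omega⟩
            (by simp only [Fin.val_mk]; omega)]
        ring
      · -- j = i + 1 : diagonal terms
        have e1 : (⟨(j : ℕ) - 1, by omega⟩ : Fin n) = i := Fin.ext (by simp only [Fin.val_mk]; omega)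
        have e2 : j = (⟨(i : ℕ) + 1, hi⟩ : Fin n) := Fin.ext (by simp only [Fin.val_mk]; omega)
        rw [omega_lower lam ⟨(i : ℕ) + 1, hi⟩ ⟨(j : ℕ) - 1, by omega⟩
            (by simp only [Fin.val_mk]; omega),
          e1, omega_diag, e2, omega_diag]
        simp only [Fin.val_mk]
        have hk : n - 1 - (i : ℕ) = (n - 1 - ((i : ℕ) + 1)) + 1 := by omega
        rw [hk]
        exact collectd hlam _ _ _ (by push_cast; omega)
      · -- i + 1 < j
        by_cases hlast : (j : ℕ) = n - 1
        · -- last column case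
          rw [omega_lastcol lam ⟨(i : ℕ) + 1, hi⟩ j (by simp only [Fin.val_mk]; omega) hlast,
            omega_formula lam i ⟨(j : ℕ) - 1, by omega⟩ (by simp only [Fin.val_mk]; omega)
              (by simp only [Fin.val_mk]; omega),
            omega_formula lam ⟨(i : ℕ) + 1, hi⟩ ⟨(j : ℕ) - 1, by omega⟩
              (by simp only [Fin.val_mk]; omega) (by simp only [Fin.val_mk]; omega)]
          simp only [Fin.val_mk]
          have hk : n - 1 - (i : ℕ) = (n - 1 - ((i : ℕ) + 1)) + 1 := by omega
          have hc1 : ((j : ℕ) - 1) - (i : ℕ) = n - 2 - (i : ℕ) := by omega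
          have hc2 : ((j : ℕ) - 1) - ((i : ℕ) + 1) = n - 2 - ((i : ℕ) + 1) := by omega
          rw [hk, hc1, hc2, Nat.choose_self, Nat.choose_self]
          exact collect2 hlam _ _ _ (by push_cast; omega)
        · -- interior case
          have hjlt : (j : ℕ) < n - 1 := by omega
          rw [omega_formula lam i ⟨(j : ℕ) - 1, by omega⟩ (by simp only [Fin.val_mk]; omega)
              (by simp only [Fin.val_mk]; omega),
            omega_formula lam ⟨(i : ℕ) + 1, hi⟩ j (by simp only [Fin.val_mk]; omega) hjlt,
            omega_formula lam ⟨(i : ℕ) + 1, hi⟩ ⟨(j : ℕ) - 1, by omega⟩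
              (by simp only [Fin.val_mk]; omega) (by simp only [Fin.val_mk]; omega)]
          simp only [Fin.val_mk]
          have hk : n - 1 - (i : ℕ) = (n - 1 - ((i : ℕ) + 1)) + 1 := by omega
          have hp : n - 2 - (i : ℕ) = (n - 2 - ((i : ℕ) + 1)) + 1 := by omega
          have hq1 : ((j : ℕ) - 1) - (i : ℕ) = (((j : ℕ) - 1) - ((i : ℕ) + 1)) + 1 := by omega
          have hq2 : (j : ℕ) - ((i : ℕ) + 1) = (((j : ℕ) - 1) - ((i : ℕ) + 1)) + 1 := by omega
          rw [hk, hp, hq1, hq2]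
          exact collect3 hlam _ _ _ _ _ _ (by push_cast; omega) (by push_cast; omega)
    · rw [dif_neg hj, dif_neg hj]
      rw [omega_lower lam ⟨(i : ℕ) + 1, hi⟩ j (by simp only [Fin.val_mk]; omega)]
      ring
  · rw [dif_neg hi]
    by_cases hj : 0 < (j : ℕ)
    · rw [dif_pos hj]
      rw [omega_lower lam i ⟨(j : ℕ) - 1, by omega⟩
          (by simp only [Fin.val_mk]; have := i.isLt; have := j.isLt; omega)]
      ring
    · rw [dif_neg hj]; ring

lemma jordan_det {n : ℕ} (lam : ℂ) : (jordanBlock lam n).det = lam ^ n := by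
  have ht : (jordanBlock lam n).BlockTriangular id := by
    intro i j hij
    simp only [id] at hij
    have h1 : ¬ ((j : ℕ) = (i : ℕ)) := by omega
    have h2 : ¬ ((j : ℕ) = (i : ℕ) + 1) := by
      have : (j : ℕ) < (i : ℕ) := hij
      omega
    simp only [jordanBlock, Matrix.of_apply]
    rw [if_neg h1, if_neg h2]
  rw [Matrix.det_of_upperTriangular ht]
  have : ∀ i : Fin n, jordanBlock lam n i i = lam := by
    intro i; simp [jordanBlock]
  simp [this]

lemma key {n : ℕ} (lam : ℂ) (hlam : lam ≠ 0) :
    jordanBlock lam n * (Omega lam n * jordanBlock lam⁻¹ n) = Omega lam n := by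
  ext i j
  rw [jordan_mul_apply]
  simp only [mul_jordan_apply]
  rw [mul_add, show lam * (Omega lam n i j * lam⁻¹) = Omega lam n i j by
    field_simp, add_assoc, bracket hlam i j, add_zero]

/-- `Ω(λ,n) · J(λ⁻¹,n) = (J(λ,n))⁻¹ · Ω(λ,n)`. -/
theorem omega_mul_jordanBlock_inv {n : ℕ} (hn : 1 ≤ n) (lam : ℂ) (hlam : lam ≠ 0) :
    Omega lam n * jordanBlock lam⁻¹ n = (jordanBlock lam n)⁻¹ * Omega lam n := by
  have hdet : IsUnit (jordanBlock lam n).det := by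
    rw [jordan_det]
    exact isUnit_iff_ne_zero.mpr (pow_ne_zero _ hlam)
  calc Omega lam n * jordanBlock lam⁻¹ n
      = ((jordanBlock lam n)⁻¹ * jordanBlock lam n) * (Omega lam n * jordanBlock lam⁻¹ n) := by
        rw [Matrix.nonsing_inv_mul _ hdet, one_mul]
    _ = (jordanBlock lam n)⁻¹ * Omega lam n := by
        rw [mul_assoc, key lam hlam]
end

section
/- Let λ ∈ ℂ, λ ≠ 0, and n ≥ 1. Let Ω(λ,n) be the n×n matrix with entries x_{i,j} given by: x_{i,j} = 0 if i > j; x_{i,n} = 0 for i ≠ n; x_{n,n} = 1; x_{i,i} = (−1)^{n−i} λ^{−2(n−i)}; and x_{i,j} = (−1)^{n−i} C(n−i−1, j−i) λ^{−2n+i+j} for i < j, j ≠ n. Then Ω(λ,n) is invertible and (Ω(λ,n))⁻¹ = Ω(λ⁻¹,n). -/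
/-! With `D_λ = diag(λ^(i-n))`, every entry of `Ω(λ, n)` splits as `D_λ(i) · Ω(1, n)_{ij} · D_λ(j)`,
so `Ω(λ, n) = D_λ Ω(1, n) D_λ` and `Ω(λ, n) Ω(λ⁻¹, n) = D_λ Ω(1, n)² D_λ⁻¹`. It remains to see that
`Ω(1, n)` is an involution. Its last column is the last unit vector, and in a column `k < n` and
row `i ≤ k` the entry of `Ω(1, n)²` is, with `a = n - i - 1` and `d = k - i`, the alternating sum
`∑ₜ (-1)ᵗ C(a, t) C(a - t, d - t) = C(a, d) ∑ₜ (-1)ᵗ C(d, t) = δ_{d,0}`. -/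

theorem Int.alternating_sum_range_choose_mul_choose (a d : ℕ) :
    ∑ t ∈ Finset.range (d + 1), ((-1) ^ t * a.choose t * (a - t).choose (d - t) : ℤ) =
      if d = 0 then 1 else 0 := by
  have hchoose : ∀ t ∈ Finset.range (d + 1),
      ((-1) ^ t * a.choose t * (a - t).choose (d - t) : ℤ) = a.choose d * ((-1) ^ t * d.choose t) := by
    intro t ht
    rw [mul_assoc, ← Nat.cast_mul, ← Nat.choose_mul (Finset.mem_range_succ_iff.mp ht)]
    push_cast
    ring
  rw [Finset.sum_congr rfl hchoose, ← Finset.mul_sum, Int.alternating_sum_range_choose]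
  split_ifs with hd <;> simp [hd]

namespace Omega

variable {lam : ℂ} {n : ℕ} {i j k : Fin n}

theorem apply_of_lt (h : (j : ℕ) < i) : Omega lam n i j = 0 := by
  rw [Omega, Matrix.of_apply, if_pos h]

theorem isUpperTriangular : (Omega lam n).IsUpperTriangular := fun _ _ h => apply_of_lt h

theorem apply_of_eq_last (hj : (j : ℕ) = n - 1) : Omega lam n i j = if i = j then 1 else 0 := by
  rw [Omega, Matrix.of_apply]
  by_cases h : i = j
  · subst h
    have hnat : n - 1 - (i : ℕ) = 0 := by omega
    have hint : (n : ℤ) - 1 - (i : ℕ) = 0 := by omega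
    simp [hnat, hint]
  · simp [h, hj]

theorem apply_of_le_of_lt (hij : (i : ℕ) ≤ j) (hj : (j : ℕ) < n - 1) :
    Omega lam n i j = (-1) ^ (n - 1 - (i : ℕ)) * ((n - 2 - (i : ℕ)).choose ((j : ℕ) - i)) *
      lam ^ ((i : ℤ) + (j : ℕ) + 2 - 2 * n) := by
  rw [Omega, Matrix.of_apply, if_neg (not_lt.mpr hij)]
  by_cases h : i = j
  · subst h
    rw [if_pos rfl, Nat.sub_self, Nat.choose_zero_right, Nat.cast_one, mul_one]
    ring_nf
  · rw [if_neg h, if_neg hj.ne]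

noncomputable def scaling (lam : ℂ) (n : ℕ) : Matrix (Fin n) (Fin n) ℂ :=
  Matrix.diagonal fun i => lam ^ ((i : ℤ) + 1 - n)

theorem eq_scaling_mul_one_mul_scaling (lam : ℂ) (n : ℕ) :
    Omega lam n = scaling lam n * Omega 1 n * scaling lam n := by
  ext i j
  rw [scaling, Matrix.mul_diagonal, Matrix.diagonal_mul]
  rcases lt_or_ge (j : ℕ) i with hji | hij
  · simp [apply_of_lt hji]
  by_cases hj : (j : ℕ) = n - 1
  · rw [apply_of_eq_last hj, apply_of_eq_last hj]
    split_ifs with h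
    · subst h
      have hzero : (i : ℤ) + 1 - n = 0 := by omega
      simp [hzero]
    · simp
  · have hj' : (j : ℕ) < n - 1 := by omega
    -- `zpow_add'` needs no `lam ≠ 0` here, because the sum of the exponents is negative
    have hexp : lam ^ ((i : ℤ) + (j : ℕ) + 2 - 2 * n) =
        lam ^ ((i : ℤ) + 1 - n) * lam ^ ((j : ℤ) + 1 - n) := by
      rw [← zpow_add' (Or.inr (Or.inl (by omega)))]
      ring_nf
    rw [apply_of_le_of_lt hij hj', apply_of_le_of_lt hij hj', one_zpow, mul_one, hexp]
    ring

theorem scaling_mul_scaling_inv (hlam : lam ≠ 0) (n : ℕ) :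
    scaling lam n * scaling lam⁻¹ n = 1 := by
  rw [scaling, scaling, Matrix.diagonal_mul_diagonal, ← Matrix.diagonal_one]
  congr 1
  ext i
  rw [inv_zpow, mul_inv_cancel₀ (zpow_ne_zero _ hlam)]

theorem one_mul_one_apply_of_le (hik : (i : ℕ) ≤ k) (hk : (k : ℕ) < n - 1) :
    (Omega 1 n * Omega 1 n) i k = ((∑ t ∈ Finset.range (k - i + 1),
      (-1) ^ t * (n - 2 - i).choose t * (n - 2 - i - t).choose (k - i - t) : ℤ) : ℂ) := by
  set a := n - 2 - (i : ℕ)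
  set d := (k : ℕ) - i
  calc (Omega 1 n * Omega 1 n) i k = ∑ j ∈ Finset.Icc i k, Omega 1 n i j * Omega 1 n j k := by
        rw [Matrix.mul_apply]
        refine (Finset.sum_subset (Finset.subset_univ _) fun j _ hj => ?_).symm
        rw [Finset.mem_Icc, not_and_or, not_le, not_le] at hj
        rcases hj with hji | hkj
        · rw [apply_of_lt hji, zero_mul]
        · rw [apply_of_lt hkj, mul_zero]
    _ = ∑ m ∈ Finset.Icc (i : ℕ) k, (-1) ^ (n - 1 - (i : ℕ)) * (a.choose (m - i) : ℂ) *
          ((-1) ^ (n - 1 - m) * ((n - 2 - m).choose (k - m) : ℂ)) := by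
        rw [← Fin.map_valEmbedding_Icc, Finset.sum_map]
        refine Finset.sum_congr rfl fun j hj => ?_
        rw [Finset.mem_Icc] at hj
        rw [apply_of_le_of_lt hj.1 (by omega), apply_of_le_of_lt hj.2 hk]
        simp only [Fin.valEmbedding_apply, one_zpow, mul_one]
        rfl
    _ = _ := by
        rw [← Finset.Ico_add_one_right_eq_Icc, Finset.sum_Ico_eq_sum_range,
          show (k : ℕ) + 1 - i = d + 1 by omega]
        push_cast
        refine Finset.sum_congr rfl fun t ht => ?_
        rw [Finset.mem_range] at ht
        rw [Nat.add_sub_cancel_left, show n - 2 - (i + t) = a - t by omega,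
          show (k : ℕ) - (i + t) = d - t by omega,
          show n - 1 - (i : ℕ) = t + (n - 1 - (i + t)) by omega, pow_add]
        have hsign : (-1 : ℂ) ^ (n - 1 - (i + t)) * (-1) ^ (n - 1 - (i + t)) = 1 := by
          rw [← mul_pow, neg_mul_neg, mul_one, one_pow]
        linear_combination ((-1 : ℂ) ^ t * a.choose t * (a - t).choose (d - t)) * hsign

theorem one_mul_one (n : ℕ) : Omega 1 n * Omega 1 n = 1 := by
  ext i k
  by_cases hk : (k : ℕ) = n - 1
  · simp only [Matrix.mul_apply, Matrix.one_apply, apply_of_eq_last hk, mul_ite, mul_one,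
      mul_zero, Finset.sum_ite_eq', Finset.mem_univ, if_true]
  rcases lt_or_ge (k : ℕ) i with hki | hik
  · rw [isUpperTriangular.mul isUpperTriangular hki, Matrix.one_apply_ne (by grind)]
  rw [one_mul_one_apply_of_le hik (by omega), Int.alternating_sum_range_choose_mul_choose,
    Matrix.one_apply]
  have hd : (k : ℕ) - i = 0 ↔ i = k := by rw [Fin.ext_iff]; omega
  simp [hd]

theorem mul_omega_inv_eq_one (hlam : lam ≠ 0) (n : ℕ) : Omega lam n * Omega lam⁻¹ n = 1 := by
  rw [eq_scaling_mul_one_mul_scaling lam, eq_scaling_mul_one_mul_scaling lam⁻¹]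
  calc _ = scaling lam n * Omega 1 n * (scaling lam n * scaling lam⁻¹ n) * Omega 1 n *
        scaling lam⁻¹ n := by simp only [Matrix.mul_assoc]
    _ = scaling lam n * (Omega 1 n * Omega 1 n) * scaling lam⁻¹ n := by
        rw [scaling_mul_scaling_inv hlam, Matrix.mul_one]
        simp only [Matrix.mul_assoc]
    _ = 1 := by rw [one_mul_one, Matrix.mul_one, scaling_mul_scaling_inv hlam]

end Omega

theorem omega_inv_general {n : ℕ} (lam : ℂ) (hlam : lam ≠ 0) :
    IsUnit (Omega lam n) ∧ (Omega lam n)⁻¹ = Omega lam⁻¹ n := by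
  have h := Omega.mul_omega_inv_eq_one hlam n
  exact ⟨(Matrix.isUnit_iff_isUnit_det _).2 (Matrix.isUnit_det_of_right_inverse h),
    Matrix.inv_eq_right_inv h⟩

/-- `Ω(λ, n)` is invertible, with inverse `Ω(λ⁻¹, n)`. -/
theorem omega_inv {n : ℕ} (hn : 1 ≤ n) (lam : ℂ) (hlam : lam ≠ 0) :
    IsUnit (Omega lam n) ∧ (Omega lam n)⁻¹ = Omega lam⁻¹ n :=
  omega_inv_general lam hlam
end

section
/- Let μ ∈ {1,−1} and n ≥ 1. Let Ω(μ,n) be the n×n matrix with entries x_{i,j} given by: x_{i,j} = 0 if i > j; x_{i,n} = 0 for i ≠ n; x_{n,n} = 1; x_{i,i} = (−1)^{n−i} μ^{−2(n−i)}; and x_{i,j} = (−1)^{n−i} C(n−i−1, j−i) μ^{−2n+i+j} for i < j, j ≠ n. Then Ω(μ,n) is an involution in GL(n,ℂ), i.e. (Ω(μ,n))² is the identity matrix. -/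
/-!
Because `μ² = 1`, the power of `μ` in each entry of `Ω(μ, n)` only matters modulo `2`, so
`Ω(μ, n) = D P D` with `D = diag(μ⁰, …, μⁿ⁻¹)`, `D² = 1`, and `P` the integer matrix
`P i j = (-1)^(n-1-i) C(n-2-i, j-i)` for `i ≤ j`. It remains to show `P² = 1`. Writing
`N = n-2-i`, `K = k-i` and `j = i+m`, the signs combine to `(-1)^m` and
`(P²) i k = ∑ₘ (-1)^m C(N, m) C(N-m, K-m) = C(N, K) ∑ₘ (-1)^m C(K, m)`, which vanishes unless `K = 0`.
-/

open Finset

theorem alternating_sum_choose_mul_choose {R : Type*} [CommRing R] (N K : ℕ) :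
    ∑ m ∈ range (K + 1), (-1 : R) ^ m * N.choose m * (N - m).choose (K - m) =
      if K = 0 then 1 else 0 := by
  have hterm : ∀ m ∈ range (K + 1), (-1 : R) ^ m * N.choose m * (N - m).choose (K - m) =
      N.choose K * ((-1) ^ m * K.choose m) := by
    intro m hm
    rw [mul_assoc, ← Nat.cast_mul, ← Nat.choose_mul (Nat.lt_succ_iff.mp (mem_range.mp hm)),
      Nat.cast_mul]
    ring
  have hsum := congrArg (Int.cast : ℤ → R) (Int.alternating_sum_range_choose (n := K))
  push_cast at hsum
  rw [sum_congr rfl hterm, ← mul_sum, hsum]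
  split_ifs with hK <;> simp [hK]

theorem zpow_eq_pow_of_sq_eq_one {G₀ : Type*} [GroupWithZero G₀] {x : G₀} (hx : x ^ 2 = 1)
    {z : ℤ} {k : ℕ} (h : z ≡ k [ZMOD 2]) : x ^ z = x ^ k := by
  have hx0 : x ≠ 0 := by rintro rfl; simp at hx
  obtain ⟨t, ht⟩ := Int.modEq_iff_dvd.mp h.symm
  rw [show z = k + 2 * t by omega, zpow_add₀ hx0, zpow_mul, zpow_natCast, zpow_ofNat, hx,
    one_zpow, mul_one]

section SignedPascal

variable (R : Type*) [CommRing R]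

/-- With `0`-based indices and truncated subtraction this also covers the last row and column of
`Ω`: `C(n - 2 - i, n - 1 - i) = 0` for `i < n - 1`, and the corner entry is `C(0, 0) = 1`. -/
def signedPascalEntry (n i j : ℕ) : R :=
  if j < i then 0 else (-1) ^ (n - 1 - i) * (n - 2 - i).choose (j - i)

variable {R}

theorem signedPascalEntry_mul_eq_zero {n i j k : ℕ} (h : j < i ∨ k < j) :
    signedPascalEntry R n i j * signedPascalEntry R n j k = 0 := by
  rcases h with h | h <;> simp [signedPascalEntry, h]

theorem signedPascalEntry_mul_of_le {n i m k : ℕ} (hm : i + m ≤ k) (hk : k < n) :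
    signedPascalEntry R n i (i + m) * signedPascalEntry R n (i + m) k =
      (-1) ^ m * (n - 2 - i).choose m * (n - 2 - i - m).choose (k - i - m) := by
  have hsign : (-1 : R) ^ (n - 1 - i) * (-1) ^ (n - 1 - (i + m)) = (-1) ^ m := by
    rw [show n - 1 - i = m + (n - 1 - (i + m)) by omega, pow_add, mul_assoc, ← pow_add,
      ← two_mul, pow_mul, neg_one_sq, one_pow, mul_one]
  rw [signedPascalEntry, signedPascalEntry, if_neg (by omega), if_neg (by omega),
    show i + m - i = m by omega, show n - 2 - (i + m) = n - 2 - i - m by omega,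
    show k - (i + m) = k - i - m by omega, ← hsign]
  ring

theorem sum_signedPascalEntry_mul {n i k : ℕ} (hk : k < n) :
    ∑ j ∈ range n, signedPascalEntry R n i j * signedPascalEntry R n j k =
      if i = k then 1 else 0 := by
  rcases lt_or_ge k i with hki | hik
  · rw [if_neg (by omega)]
    exact sum_eq_zero fun j _ => signedPascalEntry_mul_eq_zero (by omega)
  have hsupport : ∑ j ∈ Ico i (k + 1), signedPascalEntry R n i j * signedPascalEntry R n j k =
      ∑ j ∈ range n, signedPascalEntry R n i j * signedPascalEntry R n j k :=
    sum_subset (fun j hj => by simp only [mem_Ico, mem_range] at hj ⊢; omega)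
      fun j _ hj => signedPascalEntry_mul_eq_zero (by simp only [mem_Ico] at hj; omega)
  rw [← hsupport, sum_Ico_eq_sum_range, show k + 1 - i = k - i + 1 by omega,
    sum_congr rfl fun m hm => signedPascalEntry_mul_of_le (by rw [mem_range] at hm; omega) hk,
    alternating_sum_choose_mul_choose]
  exact if_congr (by omega) rfl rfl

variable (R) in
def signedPascal (n : ℕ) : Matrix (Fin n) (Fin n) R :=
  Matrix.of fun i j => signedPascalEntry R n i j

theorem signedPascal_mul_self (n : ℕ) : signedPascal R n * signedPascal R n = 1 := by
  ext i k
  simp only [Matrix.mul_apply, Matrix.one_apply, signedPascal, Matrix.of_apply]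
  rw [Fin.sum_univ_eq_sum_range (fun j => signedPascalEntry R n i j * signedPascalEntry R n j k),
    sum_signedPascalEntry_mul k.isLt]
  simp only [Fin.val_inj]

end SignedPascal

theorem omega_eq_diagonal_mul_signedPascal_mul_diagonal {mu : ℂ} (hmu : mu ^ 2 = 1) (n : ℕ) :
    Omega mu n = Matrix.diagonal (fun i : Fin n => mu ^ (i : ℕ)) * signedPascal ℂ n *
      Matrix.diagonal (fun i : Fin n => mu ^ (i : ℕ)) := by
  ext i j
  rw [Matrix.mul_diagonal, Matrix.diagonal_mul, mul_right_comm, ← pow_add]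
  simp only [Omega, signedPascal, signedPascalEntry, Matrix.of_apply]
  split_ifs with hji hij hlast
  · simp
  · subst hij
    rw [zpow_eq_pow_of_sq_eq_one hmu (k := i + i) (by rw [Int.modEq_iff_dvd]; omega)]
    simp [mul_comm]
  · rw [Nat.choose_eq_zero_of_lt (by omega), Nat.cast_zero, mul_zero, mul_zero]
  · rw [zpow_eq_pow_of_sq_eq_one hmu (k := i + j) (by rw [Int.modEq_iff_dvd]; omega)]
    ring

theorem conj_mul_self_eq_one {M : Type*} [Monoid M] {d a : M} (hd : d * d = 1)
    (ha : a * a = 1) : d * a * d * (d * a * d) = 1 :=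
  calc d * a * d * (d * a * d) = d * a * (d * d) * a * d := by simp only [mul_assoc]
    _ = 1 := by rw [hd, mul_one, mul_assoc d a a, ha, mul_one, hd]

theorem omega_involution_general {n : ℕ} (mu : ℂ) (hmu : mu = 1 ∨ mu = -1) :
    Omega mu n * Omega mu n = 1 := by
  have hmu2 : mu ^ 2 = 1 := by rcases hmu with rfl | rfl <;> norm_num
  have hdiag : Matrix.diagonal (fun i : Fin n => mu ^ (i : ℕ)) *
      Matrix.diagonal (fun i : Fin n => mu ^ (i : ℕ)) = 1 := by
    rw [Matrix.diagonal_mul_diagonal, ← Matrix.diagonal_one]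
    congr
    funext i
    rw [← pow_add, ← two_mul, pow_mul, hmu2, one_pow]
  rw [omega_eq_diagonal_mul_signedPascal_mul_diagonal hmu2]
  exact conj_mul_self_eq_one hdiag (signedPascal_mul_self n)

/-- For `μ ∈ {1, -1}`, the matrix `Ω(μ, n)` is an involution: `Ω(μ,n)² = Iₙ`. -/
theorem omega_involution {n : ℕ} (hn : 1 ≤ n) (mu : ℂ) (hmu : mu = 1 ∨ mu = -1) :
    Omega mu n * Omega mu n = 1 :=
  omega_involution_general mu hmu
end

section
/- Let λ ∈ ℂ∖{0}, n ≥ 1, and x = (x₁,…,x_n) ∈ ℂⁿ with x₁ ≠ 0. Let Toep_n(x) be the upper triangular Toeplitz matrix with (i,j) entry equal to x_{j−i+1} for i ≤ j and 0 for i > j, and let Ω(λ,n) be the n×n matrix with entries: 0 below the diagonal; 0 in column n except the (n,n) entry which is 1; diagonal entry (−1)^{n−i} λ^{−2(n−i)} at position (i,i); and (−1)^{n−i} C(n−i−1, j−i) λ^{−2n+i+j} at position (i,j) for i < j, j ≠ n. Set g = Toep_n(x)·Ω(λ,n), with entries g_{i,j}. Then: (a) g_{i,j} = 0 for i > j; (b)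 g_{i,n} = x_{n−i+1} for all 1 ≤ i ≤ n; (c) g_{i,j} = −λ⁻² g_{i+1,j+1} − λ⁻¹ g_{i+1,j} for all 1 ≤ i ≤ j ≤ n−1; and (d) g·J(λ⁻¹,n) = (J(λ,n))⁻¹·g. -/
/-- The upper triangular Toeplitz matrix with `(i,j)` entry `x_{j-i+1}` (1-based), i.e.
`x (j - i)` in 0-based indexing, for `i ≤ j`, and `0` for `i > j`. -/
noncomputable def toep {n : ℕ} (x : Fin n → ℂ) : Matrix (Fin n) (Fin n) ℂ :=
  Matrix.of fun i j =>
    if (i : ℕ) ≤ (j : ℕ) then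
      x ⟨(j : ℕ) - (i : ℕ), lt_of_le_of_lt (Nat.sub_le _ _) j.isLt⟩ else 0

/-!
Upper triangular Toeplitz matrices are polynomials in the nilpotent Jordan block, so `toep x`
commutes with `J(λ, n)`, and (d) for `g = toep x * Ω` reduces to `J(λ) Ω J(λ⁻¹) = Ω`. For an upper
triangular matrix `M`, the identity `J(μ) M J(μ⁻¹) = M` is equivalent, entry by entry, to the
recurrence (c); this gives (c) for `g` once (d) is known. Indexed from the bottom-right corner,
`Ω(λ, n)` has entries `(-1)^a C(a-1, b-1) λ^{-(a+b)}` (and `e_n` as last column), so the recurrence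
for `Ω` is Pascal's rule. The last column `e_n` also gives (b), and (a) holds because both factors
are upper triangular.
-/

section

variable {n : ℕ}

theorem jordanBlock_apply (μ : ℂ) (i j : Fin n) :
    jordanBlock μ n i j = if (j : ℕ) = i then μ else if (j : ℕ) = i + 1 then 1 else 0 :=
  rfl

theorem jordanBlock_mul_apply (μ : ℂ) (M : Matrix (Fin n) (Fin n) ℂ) (i j : Fin n) :
    (jordanBlock μ n * M) i j =
      μ * M i j + if h : (i : ℕ) + 1 < n then M ⟨i + 1, h⟩ j else 0 := by
  rw [Matrix.mul_apply]
  split_ifs with h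
  · rw [Fintype.sum_eq_add i ⟨i + 1, h⟩ (by simp [Fin.ext_iff])]
    · simp [jordanBlock_apply]
    · rintro k ⟨hki, hki'⟩
      rw [jordanBlock_apply, if_neg (Fin.val_ne_of_ne hki), if_neg (Fin.val_ne_of_ne hki'),
        zero_mul]
  · rw [Fintype.sum_eq_single i]
    · simp [jordanBlock_apply]
    · intro k hk
      rw [jordanBlock_apply, if_neg (Fin.val_ne_of_ne hk), if_neg (by omega), zero_mul]

theorem mul_jordanBlock_apply (M : Matrix (Fin n) (Fin n) ℂ) (μ : ℂ) (i j : Fin n) :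
    (M * jordanBlock μ n) i j =
      M i j * μ + if h : 0 < (j : ℕ) then M i ⟨j - 1, by omega⟩ else 0 := by
  rw [Matrix.mul_apply]
  split_ifs with h
  · rw [Fintype.sum_eq_add j ⟨j - 1, by omega⟩ (by simp [Fin.ext_iff]; omega)]
    · simp only [jordanBlock_apply, if_true, mul_ite, mul_one, mul_zero]
      rw [if_neg (by omega), if_pos (by omega)]
    · rintro k ⟨hkj, hkj'⟩
      have hkj'' : (k : ℕ) ≠ j - 1 := fun h => hkj' (Fin.ext h)
      rw [jordanBlock_apply, if_neg (Fin.val_ne_of_ne hkj).symm, if_neg (by omega), mul_zero]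
  · rw [Fintype.sum_eq_single j]
    · simp [jordanBlock_apply]
    · intro k hk
      rw [jordanBlock_apply, if_neg (Fin.val_ne_of_ne hk).symm, if_neg (by omega), mul_zero]

theorem det_jordanBlock (μ : ℂ) : (jordanBlock μ n).det = μ ^ n := by
  rw [Matrix.det_of_isUpperTriangular fun i j (h : j < i) => by
    rw [jordanBlock_apply, if_neg (by omega), if_neg (by omega)]]
  simp [jordanBlock_apply]

theorem jordanBlock_mul_mul_jordanBlock_inv_eq_self_iff {μ : ℂ} (hμ : μ ≠ 0)
    {M : Matrix (Fin n) (Fin n) ℂ} (hM : M.IsUpperTriangular) :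
    jordanBlock μ n * M * jordanBlock μ⁻¹ n = M ↔
      ∀ i j : ℕ, ∀ hi : i + 1 < n, ∀ hj : j + 1 < n,
        M ⟨i, by omega⟩ ⟨j, by omega⟩ =
          -(μ ^ (-2 : ℤ)) * M ⟨i + 1, hi⟩ ⟨j + 1, hj⟩ - μ⁻¹ * M ⟨i + 1, hi⟩ ⟨j, by omega⟩ := by
  have hμμ : μ * μ⁻¹ = 1 := mul_inv_cancel₀ hμ
  rw [_root_.zpow_neg, zpow_ofNat, ← inv_pow]
  constructor
  · intro h i j hi hj
    -- the `(i, j + 1)` entry of the identity is `μ` times the recurrence at `(i, j)`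
    have hij := congrFun (congrFun h ⟨i, by omega⟩) ⟨j + 1, hj⟩
    simp only [mul_jordanBlock_apply, jordanBlock_mul_apply, dif_pos hi,
      dif_pos (Nat.succ_pos j), Nat.add_sub_cancel] at hij
    linear_combination μ⁻¹ * hij
      - (M ⟨i, by omega⟩ ⟨j, by omega⟩ + μ⁻¹ * M ⟨i, by omega⟩ ⟨j + 1, hj⟩) * hμμ
  · intro h
    ext i j
    simp only [mul_jordanBlock_apply, jordanBlock_mul_apply]
    split_ifs with hi hj
    · have hj' : (⟨j - 1 + 1, by omega⟩ : Fin n) = j := Fin.ext (by simp; omega)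
      have hrec := h i (j - 1) hi (by omega)
      rw [hj'] at hrec
      linear_combination μ * hrec
        + (M i j - μ⁻¹ * M ⟨i + 1, hi⟩ j - M ⟨i + 1, hi⟩ ⟨j - 1, by omega⟩) * hμμ
    · rw [hM (show j < ⟨i + 1, hi⟩ by simp [Fin.lt_def]; omega)]
      linear_combination M i j * hμμ
    · rw [hM (show ⟨j - 1, _⟩ < i by simp [Fin.lt_def]; omega)]
      linear_combination M i j * hμμ
    · linear_combination M i j * hμμ

theorem toep_isUpperTriangular (x : Fin n → ℂ) : (toep x).IsUpperTriangular :=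
  fun i j (h : j < i) => by rw [toep, Matrix.of_apply, if_neg (by simpa using h)]

theorem toep_apply_of_eq_last (x : Fin n → ℂ) (i j : Fin n) (hj : (j : ℕ) = n - 1) :
    toep x i j = x ⟨n - 1 - i, by omega⟩ := by
  rw [toep, Matrix.of_apply, if_pos (by omega)]
  simp only [hj]

theorem commute_toep_jordanBlock (x : Fin n → ℂ) (μ : ℂ) :
    Commute (toep x) (jordanBlock μ n) := by
  ext i j
  rw [mul_jordanBlock_apply, jordanBlock_mul_apply, mul_comm μ]
  congr 1
  simp only [toep, Matrix.of_apply]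
  split_ifs <;> first | rfl | omega | (congr 1; ext; simp; omega)

def omegaCorner (t : ℂ) : ℕ → ℕ → ℂ
  | 0, 0 => 1
  | a + 1, b + 1 => (-1) ^ (a + 1) * a.choose b * t ^ (a + b + 2)
  | _, _ => 0

theorem omegaCorner_eq_zero_of_lt (t : ℂ) {a b : ℕ} (h : a < b) : omegaCorner t a b = 0 := by
  match a, b, h with
  | 0, _ + 1, _ => rfl
  | a + 1, b + 1, h => simp [omegaCorner, Nat.choose_eq_zero_of_lt (Nat.succ_lt_succ_iff.1 h)]

theorem omegaCorner_succ_zero (t : ℂ) (a : ℕ) : omegaCorner t (a + 1) 0 = 0 := rfl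

theorem omegaCorner_pascal (t : ℂ) (a b : ℕ) :
    omegaCorner t (a + 1) (b + 1) + t * omegaCorner t a (b + 1) + t ^ 2 * omegaCorner t a b
      = 0 := by
  rcases a with _ | a <;> rcases b with _ | b
  · simp [omegaCorner]
  · simp [omegaCorner]
  · simp [omegaCorner]; ring
  · simp only [omegaCorner, Nat.choose_succ_succ', Nat.cast_add]; ring

theorem Omega_apply (lam : ℂ) (i j : Fin n) :
    Omega lam n i j = omegaCorner lam⁻¹ (n - 1 - i) (n - 1 - j) := by
  have hi := i.isLt
  have hj := j.isLt
  simp only [Omega, Matrix.of_apply, Fin.ext_iff]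
  split_ifs with hji hij hjn
  · rw [omegaCorner_eq_zero_of_lt _ (by omega)]
  · rw [← hij]
    obtain ⟨a, ha⟩ : ∃ a, n - 1 - (i : ℕ) = a := ⟨_, rfl⟩
    have hz : (n : ℤ) - 1 - (i : ℕ) = a := by omega
    rw [ha, hz, _root_.zpow_neg, zpow_mul, zpow_natCast, ← inv_pow]
    rcases a with _ | a
    · simp [omegaCorner]
    · simp [omegaCorner]; ring
  · obtain ⟨a, ha⟩ : ∃ a, n - 1 - (i : ℕ) = a + 1 := ⟨n - 2 - i, by omega⟩
    rw [hjn, ha, Nat.sub_self, omegaCorner_succ_zero]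
  · obtain ⟨a, ha⟩ : ∃ a, n - 1 - (i : ℕ) = a + 1 := ⟨n - 2 - i, by omega⟩
    obtain ⟨b, hb⟩ : ∃ b, n - 1 - (j : ℕ) = b + 1 := ⟨n - 2 - j, by omega⟩
    have hexp : (i : ℤ) + (j : ℕ) + 2 - 2 * n = -((a + b + 2 : ℕ) : ℤ) := by omega
    have hchoose : (n - 2 - (i : ℕ)).choose (j - i) = a.choose b := by
      rw [show n - 2 - (i : ℕ) = (j - i) + b by omega, Nat.choose_symm_add]; congr 1; omega
    rw [ha, hb, hexp, hchoose, _root_.zpow_neg, zpow_natCast, ← inv_pow, omegaCorner]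

theorem Omega_isUpperTriangular (lam : ℂ) (n : ℕ) : (Omega lam n).IsUpperTriangular :=
  fun i j (h : j < i) => by rw [Omega, Matrix.of_apply, if_pos (Fin.lt_def.1 h)]

theorem Omega_apply_of_eq_last (lam : ℂ) (i j : Fin n) (hj : (j : ℕ) = n - 1) :
    Omega lam n i j = if i = j then 1 else 0 := by
  rw [Omega_apply, hj, Nat.sub_self]
  split_ifs with hij
  · rw [hij, hj, Nat.sub_self]; rfl
  · obtain ⟨a, ha⟩ : ∃ a, n - 1 - (i : ℕ) = a + 1 := ⟨n - 2 - i, by omega⟩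
    rw [ha, omegaCorner_succ_zero]

theorem Omega_rec (lam : ℂ) (n : ℕ) (i j : ℕ) (hi : i + 1 < n) (hj : j + 1 < n) :
    Omega lam n ⟨i, by omega⟩ ⟨j, by omega⟩ =
      -(lam ^ (-2 : ℤ)) * Omega lam n ⟨i + 1, hi⟩ ⟨j + 1, hj⟩
        - lam⁻¹ * Omega lam n ⟨i + 1, hi⟩ ⟨j, by omega⟩ := by
  obtain ⟨a, ha⟩ : ∃ a, n - 1 - i = a + 1 := ⟨n - 2 - i, by omega⟩
  obtain ⟨b, hb⟩ : ∃ b, n - 1 - j = b + 1 := ⟨n - 2 - j, by omega⟩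
  simp only [Omega_apply, ha, hb, show n - 1 - (i + 1) = a by omega,
    show n - 1 - (j + 1) = b by omega]
  rw [_root_.zpow_neg, zpow_ofNat, ← inv_pow]
  linear_combination omegaCorner_pascal lam⁻¹ a b

theorem jordanBlock_mul_toep_mul_Omega_mul_jordanBlock_inv {lam : ℂ} (hlam : lam ≠ 0)
    (x : Fin n → ℂ) :
    jordanBlock lam n * (toep x * Omega lam n) * jordanBlock lam⁻¹ n = toep x * Omega lam n := by
  have hΩ := (jordanBlock_mul_mul_jordanBlock_inv_eq_self_iff hlam
    (Omega_isUpperTriangular lam n)).2 (Omega_rec lam n)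
  rw [← Matrix.mul_assoc, ← (commute_toep_jordanBlock x lam).eq, Matrix.mul_assoc (toep x),
    Matrix.mul_assoc (toep x), hΩ]

theorem toep_mul_Omega_apply_of_eq_last (x : Fin n → ℂ) (lam : ℂ) (i j : Fin n)
    (hj : (j : ℕ) = n - 1) : (toep x * Omega lam n) i j = x ⟨n - 1 - i, by omega⟩ := by
  simp only [Matrix.mul_apply, Omega_apply_of_eq_last lam _ j hj, mul_ite, mul_one, mul_zero,
    Finset.sum_ite_eq', Finset.mem_univ, if_true]
  exact toep_apply_of_eq_last x i j hj

end

theorem toep_mul_omega_props {n : ℕ} (hn : 1 ≤ n) (lam : ℂ) (hlam : lam ≠ 0)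
    (x : Fin n → ℂ)
    (g : Matrix (Fin n) (Fin n) ℂ) (hg : g = toep x * Omega lam n) :
    (∀ i j : Fin n, (j : ℕ) < (i : ℕ) → g i j = 0) ∧
    (∀ i : Fin n, g i ⟨n - 1, by omega⟩ = x ⟨n - 1 - (i : ℕ), by omega⟩) ∧
    (∀ i j : ℕ, ∀ hij : i ≤ j, ∀ hj : j < n - 1,
      g ⟨i, by omega⟩ ⟨j, by omega⟩ =
        -(lam ^ (-2 : ℤ)) * g ⟨i + 1, by omega⟩ ⟨j + 1, by omega⟩
          - lam⁻¹ * g ⟨i + 1, by omega⟩ ⟨j, by omega⟩) ∧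
    g * jordanBlock lam⁻¹ n = (jordanBlock lam n)⁻¹ * g := by
  subst hg
  have hup : (toep x * Omega lam n).IsUpperTriangular :=
    (toep_isUpperTriangular x).mul (Omega_isUpperTriangular lam n)
  have hconj := jordanBlock_mul_toep_mul_Omega_mul_jordanBlock_inv hlam x
  refine ⟨fun i j h => hup h, fun i => toep_mul_Omega_apply_of_eq_last x lam i _ rfl,
    fun i j _ hj => (jordanBlock_mul_mul_jordanBlock_inv_eq_self_iff hlam hup).1 hconj i j
      (by omega) (by omega), ?_⟩
  have hdet : IsUnit (jordanBlock lam n).det := by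
    rw [det_jordanBlock]
    exact (pow_ne_zero n hlam).isUnit
  rw [← Matrix.nonsing_inv_mul_cancel_left _ (toep x * Omega lam n * jordanBlock lam⁻¹ n) hdet,
    ← Matrix.mul_assoc (jordanBlock lam n), hconj]
end

section
/- Let μ ∈ {1,−1} and n ≥ 1. Then the set of reversing elements R = {g ∈ GL(n,ℂ) : g·J(μ,n)·g⁻¹ = (J(μ,n))⁻¹} equals {Toep_n(x)·Ω(μ,n) : x = (x₁,…,x_n) ∈ ℂⁿ, x₁ ≠ 0}, where Toep_n(x) is the upper triangular Toeplitz matrix with (i,j) entry x_{j−i+1} for i ≤ j and 0 otherwise, and Ω(μ,n) is the n×n matrix with entries: 0 below the diagonal; 0 in column n except (n,n) entry 1; diagonal entry (−1)^{n−i} μ^{−2(n−i)}; and (−1)^{n−i} C(n−i−1, j−i) μ^{−2n+i+j} at (i,j) for i < j, j ≠ n. -/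
noncomputable def wfun (mu : ℂ) (n a b : ℕ) : ℂ :=
  if b < a ∨ n ≤ b then 0
  else (-1 : ℂ) ^ (n - 1 - a) * ((n - 2 - a).choose (b - a)) * mu ^ (a + b)

section
variable {n : ℕ} {mu : ℂ}

lemma sum_pick (f : Fin n → ℂ) (m : ℕ) :
    (∑ k : Fin n, if (k : ℕ) = m then f k else 0) =
      if h : m < n then f ⟨m, h⟩ else 0 := by
  split_ifs with h
  · rw [Finset.sum_eq_single (⟨m, h⟩ : Fin n)]
    · simp
    · intro b _ hb
      rw [if_neg]
      intro hc; exact hb (Fin.ext hc)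
    · simp
  · apply Finset.sum_eq_zero; intro k _
    rw [if_neg]; omega

lemma Jmul_apply (M : Matrix (Fin n) (Fin n) ℂ) (i j : Fin n) :
    (jordanBlock mu n * M) i j =
      mu * M i j + (if h : (i : ℕ) + 1 < n then M ⟨(i : ℕ) + 1, h⟩ j else 0) := by
  rw [Matrix.mul_apply]
  have h1 : ∀ k : Fin n, jordanBlock mu n i k * M k j =
      (if (k : ℕ) = (i : ℕ) then mu * M k j else 0) +
      (if (k : ℕ) = (i : ℕ) + 1 then M k j else 0) := by
    intro k
    simp only [jordanBlock, Matrix.of_apply]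
    split_ifs with h1 h2 <;> first | omega | ring
  simp_rw [h1, Finset.sum_add_distrib, sum_pick]
  rw [dif_pos i.isLt]

lemma mulJ_apply (M : Matrix (Fin n) (Fin n) ℂ) (i j : Fin n) :
    (M * jordanBlock mu n) i j =
      mu * M i j + (if 1 ≤ (j : ℕ) then
        M i ⟨(j : ℕ) - 1, lt_of_le_of_lt (Nat.sub_le _ _) j.isLt⟩ else 0) := by
  rw [Matrix.mul_apply]
  have h1 : ∀ k : Fin n, M i k * jordanBlock mu n k j =
      (if (k : ℕ) = (j : ℕ) then mu * M i k else 0) +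
      (if 1 ≤ (j : ℕ) then (if (k : ℕ) = (j : ℕ) - 1 then M i k else 0) else 0) := by
    intro k
    simp only [jordanBlock, Matrix.of_apply]
    split_ifs with h1 h2 h3 h4 <;> first | omega | ring
  simp_rw [h1, Finset.sum_add_distrib, sum_pick]
  rw [dif_pos j.isLt]
  split_ifs with h
  · rw [sum_pick, dif_pos (lt_of_le_of_lt (Nat.sub_le _ _) j.isLt)]
  · simp

lemma toep_triangular (x : Fin n → ℂ) : Matrix.BlockTriangular (toep x) id := by
  intro i j h
  simp only [id] at h
  simp only [toep, Matrix.of_apply, if_neg (by omega : ¬ ((i:ℕ) ≤ (j:ℕ)))]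

lemma det_toep (hn : 0 < n) (x : Fin n → ℂ) : (toep x).det = (x ⟨0, hn⟩) ^ n := by
  rw [Matrix.det_of_upperTriangular (toep_triangular x)]
  have h1 : ∀ i : Fin n, toep x i i = x ⟨0, hn⟩ := by
    intro i
    simp only [toep, Matrix.of_apply, if_pos (le_refl (i:ℕ))]
    congr 1
    exact Fin.ext (by simp)
  simp_rw [h1]
  simp [Finset.prod_const]

lemma toep_comm_J (x : Fin n → ℂ) :
    toep x * jordanBlock mu n = jordanBlock mu n * toep x := by
  ext i j
  rw [mulJ_apply, Jmul_apply]
  congr 1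
  simp only [toep, Matrix.of_apply]
  split_ifs with h1 h2 h3 h4 h5 <;>
    first | omega | rfl | (exact congrArg x (Fin.mk_eq_mk.mpr (by omega)))

lemma comm_J_toep {M : Matrix (Fin n) (Fin n) ℂ}
    (h : M * jordanBlock mu n = jordanBlock mu n * M) (hn : 0 < n) :
    M = toep (fun k => M ⟨0, hn⟩ k) := by
  have key : ∀ i j : Fin n, (if 1 ≤ (j:ℕ) then
        M i ⟨(j : ℕ) - 1, lt_of_le_of_lt (Nat.sub_le _ _) j.isLt⟩ else 0)
      = (if h : (i : ℕ) + 1 < n then M ⟨(i : ℕ) + 1, h⟩ j else 0) := by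
    intro i j
    have h2 := congrFun (congrFun h i) j
    rw [mulJ_apply, Jmul_apply] at h2
    exact add_left_cancel h2
  have main : ∀ m (hm : m < n) (j : Fin n), M ⟨m, hm⟩ j =
      if m ≤ (j : ℕ) then M ⟨0, hn⟩ ⟨(j:ℕ) - m, lt_of_le_of_lt (Nat.sub_le _ _) j.isLt⟩
      else 0 := by
    intro m
    induction m with
    | zero => intro hm j; simp
    | succ p ih =>
      intro hm j
      have hp : p < n := by omega
      have e1 : M ⟨p + 1, hm⟩ j = (if 1 ≤ (j:ℕ) then
          M ⟨p, hp⟩ ⟨(j : ℕ) - 1, lt_of_le_of_lt (Nat.sub_le _ _) j.isLt⟩ else 0) := by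
        have k1 := key ⟨p, hp⟩ j
        rw [dif_pos (show (p:ℕ)+1 < n from hm)] at k1
        exact k1.symm
      rw [e1]
      have hv : (((⟨(j:ℕ)-1, lt_of_le_of_lt (Nat.sub_le _ _) j.isLt⟩ : Fin n)):ℕ)
          = (j:ℕ)-1 := rfl
      by_cases h1 : 1 ≤ (j : ℕ)
      · rw [if_pos h1, ih hp]
        simp only [hv]
        by_cases h2 : p + 1 ≤ (j : ℕ)
        · rw [if_pos (by omega), if_pos h2]
          exact congrArg _ (Fin.mk_eq_mk.mpr (by omega))
        · rw [if_neg (by omega), if_neg (by omega)]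
      · rw [if_neg h1, if_neg (by omega)]
  ext i j
  have h3 := main i i.isLt j
  simp only [Fin.eta] at h3
  rw [h3]
  simp only [toep, Matrix.of_apply]

lemma wfun_zero (a b : ℕ) (h : b < a ∨ n ≤ b) : wfun mu n a b = 0 := if_pos h

lemma wfun_val (a b : ℕ) (h1 : a ≤ b) (hb : b < n) :
    wfun mu n a b = (-1 : ℂ) ^ (n - 1 - a) * ((n - 2 - a).choose (b - a)) * mu ^ (a + b) :=
  if_neg (by omega)

lemma Omega_eq (h2 : mu * mu = 1) :
    Omega mu n = Matrix.of (fun i j : Fin n => wfun mu n i j) := by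
  have hmu0 : mu ≠ 0 := by rintro rfl; simp at h2
  have hz2 : mu ^ (2:ℤ) = 1 := by rw [zpow_two]; exact h2
  have heven : ∀ m : ℤ, mu ^ (2*m) = 1 := by intro m; rw [zpow_mul, hz2, one_zpow]
  ext i j
  simp only [Omega, Matrix.of_apply, wfun]
  by_cases hlt : (j:ℕ) < (i:ℕ)
  · rw [if_pos hlt, if_pos (Or.inl hlt)]
  · rw [if_neg hlt, if_neg (show ¬((j:ℕ) < (i:ℕ) ∨ n ≤ (j:ℕ)) by push_neg; exact ⟨by omega, j.isLt⟩)]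
    by_cases heq : i = j
    · rw [if_pos heq]
      subst heq
      rw [show -(2*((n:ℤ)-1-(i:ℕ))) = 2*(-((n:ℤ)-1-(i:ℕ))) by ring, heven]
      rw [show (i:ℕ) - (i:ℕ) = 0 by omega, Nat.choose_zero_right]
      rw [show (i:ℕ) + (i:ℕ) = 2*(i:ℕ) by omega, pow_mul]
      rw [show mu^2 = 1 by rw [pow_two]; exact h2]
      simp
    · have hne : (i:ℕ) ≠ (j:ℕ) := fun hc => heq (Fin.ext hc)
      rw [if_neg heq]
      by_cases hl : (j:ℕ) = n-1
      · rw [if_pos hl, hl, Nat.choose_eq_zero_of_lt (by omega)]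
        simp
      · rw [if_neg hl]
        rw [show ((i:ℤ) + (j:ℕ) + 2 - 2*(n:ℕ)) = (((i:ℕ)+(j:ℕ) : ℕ) : ℤ) + 2*(1-(n:ℤ)) by
          push_cast; ring]
        rw [zpow_add₀ hmu0, heven, mul_one, zpow_natCast]

lemma key_nat (h2 : mu * mu = 1) {a b : ℕ} (hb : b < n) :
    mu * (mu * wfun mu n a b + wfun mu n (a+1) b) +
      (if 1 ≤ b then mu * wfun mu n a (b-1) + wfun mu n (a+1) (b-1) else 0) =
    wfun mu n a b := by
  by_cases hb1 : 1 ≤ b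
  · rw [if_pos hb1]
    rcases (by omega : b ≤ a ∨ b = a+1 ∨ a+2 ≤ b) with hab | hab | hab
    · rw [wfun_zero (a+1) b (Or.inl (by omega)), wfun_zero a (b-1) (Or.inl (by omega)),
        wfun_zero (a+1) (b-1) (Or.inl (by omega))]
      linear_combination (wfun mu n a b) * h2
    · rw [wfun_val a b (by omega) hb, wfun_val (a+1) b (by omega) hb,
        wfun_val a (b-1) (by omega) (by omega), wfun_zero (a+1) (b-1) (Or.inl (by omega))]
      rw [show b-(a+1) = 0 by omega, show b-1-a = 0 by omega, Nat.choose_zero_right,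
        Nat.choose_zero_right]
      rw [show n-1-(a+1) = n-2-a by omega]
      rw [show n-1-a = (n-2-a)+1 by omega, pow_succ]
      rw [show a+1+b = (a+(b-1))+2 by omega, show a+b = (a+(b-1))+1 by omega,
        show a+(b-1) = (a+(b-1)) by rfl]
      push_cast
      linear_combination ((-1:ℂ)^(n-2-a) * mu^(a+(b-1)) * mu *
        (1 - (((n-2-a).choose (b-a)) : ℂ))) * h2
    · have hc00 : ((n-2-a).choose (b-a)) =
          (n-3-a).choose ((b-a-2)+1) + (n-3-a).choose ((b-a-2)+1+1) := by
        rw [show n-2-a = (n-3-a)+1 by omega, show b-a = ((b-a-2)+1)+1 by omega]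
        exact Nat.choose_succ_succ _ _
      have hc01 : ((n-2-a).choose (b-1-a)) =
          (n-3-a).choose (b-a-2) + (n-3-a).choose ((b-a-2)+1) := by
        rw [show n-2-a = (n-3-a)+1 by omega, show b-1-a = (b-a-2)+1 by omega]
        exact Nat.choose_succ_succ _ _
      have hc10 : (n-2-(a+1)).choose (b-(a+1)) = (n-3-a).choose ((b-a-2)+1) := by
        congr 1 <;> omega
      have hc11 : (n-2-(a+1)).choose (b-1-(a+1)) = (n-3-a).choose (b-a-2) := by
        congr 1 <;> omega
      rw [wfun_val a b (by omega) hb, wfun_val (a+1) b (by omega) hb,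
        wfun_val a (b-1) (by omega) (by omega), wfun_val (a+1) (b-1) (by omega) (by omega)]
      rw [hc00, hc01, hc10, hc11]
      rw [show n-1-(a+1) = n-2-a by omega]
      rw [show n-1-a = (n-2-a)+1 by omega, pow_succ]
      rw [show a+1+b = (a+(b-1))+2 by omega, show a+b = (a+(b-1))+1 by omega,
        show a+1+(b-1) = (a+(b-1))+1 by omega]
      push_cast
      linear_combination (-((-1:ℂ)^(n-2-a)) * (((n-3-a).choose ((b-a-2)+1+1)) : ℂ) *
        mu^(a+(b-1)) * mu) * h2
  · rw [if_neg hb1, wfun_zero (a+1) b (Or.inl (by omega))]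
    linear_combination (wfun mu n a b) * h2

lemma J_triangular : Matrix.BlockTriangular (jordanBlock mu n) id := by
  intro i j h
  simp only [id] at h
  simp only [jordanBlock, Matrix.of_apply]
  rw [if_neg (by omega), if_neg (by omega)]

lemma det_J : (jordanBlock mu n).det = mu ^ n := by
  rw [Matrix.det_of_upperTriangular J_triangular]
  have h1 : ∀ i : Fin n, jordanBlock mu n i i = mu := by
    intro i
    simp [jordanBlock]
  simp_rw [h1]
  simp

lemma Omega_triangular (h2 : mu * mu = 1) :
    Matrix.BlockTriangular (Omega mu n) id := by
  rw [Omega_eq h2]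
  intro i j h
  simp only [id] at h
  simp only [Matrix.of_apply]
  exact wfun_zero _ _ (Or.inl h)

lemma det_Omega_ne (h2 : mu * mu = 1) : (Omega mu n).det ≠ 0 := by
  have hmu0 : mu ≠ 0 := by rintro rfl; simp at h2
  rw [Matrix.det_of_upperTriangular (Omega_triangular h2)]
  apply Finset.prod_ne_zero_iff.mpr
  intro i _
  rw [Omega_eq h2]
  simp only [Matrix.of_apply]
  rw [wfun_val _ _ le_rfl i.isLt]
  rw [show (i:ℕ) - (i:ℕ) = 0 by omega, Nat.choose_zero_right]
  push_cast
  exact mul_ne_zero (mul_ne_zero (pow_ne_zero _ (by norm_num)) one_ne_zero)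
    (pow_ne_zero _ hmu0)

lemma JOJ (h2 : mu * mu = 1) :
    jordanBlock mu n * Omega mu n * jordanBlock mu n = Omega mu n := by
  rw [Omega_eq h2]
  ext i j
  rw [mulJ_apply]
  simp only [Jmul_apply, Matrix.of_apply, Fin.val_mk]
  have hd1 : (if h : (i:ℕ)+1 < n then wfun mu n ((i:ℕ)+1) (j:ℕ) else 0)
      = wfun mu n ((i:ℕ)+1) (j:ℕ) := by
    split_ifs with h
    · rfl
    · exact (wfun_zero _ _ (Or.inl (by omega))).symm
  have hd2 : (if h : (i:ℕ)+1 < n then wfun mu n ((i:ℕ)+1) ((j:ℕ)-1) else 0)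
      = wfun mu n ((i:ℕ)+1) ((j:ℕ)-1) := by
    split_ifs with h
    · rfl
    · exact (wfun_zero _ _ (Or.inl (by omega))).symm
  rw [hd1, hd2]
  exact key_nat h2 j.isLt

end

/-- The set of reversing elements of `J(μ, n)` in `GL(n, ℂ)` is exactly
`{Toep_n(x) · Ω(μ, n) : x₁ ≠ 0}`. -/
theorem reverser_set_jordanBlock {n : ℕ} (hn : 1 ≤ n) (mu : ℂ) (hmu : mu = 1 ∨ mu = -1) :
    {g : Matrix (Fin n) (Fin n) ℂ | IsUnit g ∧
        g * jordanBlock mu n * g⁻¹ = (jordanBlock mu n)⁻¹} =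
      {g : Matrix (Fin n) (Fin n) ℂ |
        ∃ x : Fin n → ℂ, x ⟨0, hn⟩ ≠ 0 ∧ g = toep x * Omega mu n} := by
  have h2 : mu * mu = 1 := by rcases hmu with rfl | rfl <;> norm_num
  have hmu0 : mu ≠ 0 := by rintro rfl; simp at h2
  have hJdet : IsUnit (jordanBlock mu n).det := by
    rw [det_J]; exact isUnit_iff_ne_zero.mpr (pow_ne_zero _ hmu0)
  have hOdet : IsUnit (Omega mu n).det := isUnit_iff_ne_zero.mpr (det_Omega_ne h2)
  have hOJ : Omega mu n * jordanBlock mu n = (jordanBlock mu n)⁻¹ * Omega mu n := by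
    have h3 := congrArg (fun M => (jordanBlock mu n)⁻¹ * M) (JOJ (n := n) h2)
    rwa [← Matrix.mul_assoc, ← Matrix.mul_assoc, Matrix.nonsing_inv_mul _ hJdet,
      Matrix.one_mul] at h3
  have hOJinv : (jordanBlock mu n)⁻¹ * (Omega mu n)⁻¹ = (Omega mu n)⁻¹ * jordanBlock mu n := by
    have h4 := congrArg (fun M => M⁻¹) hOJ
    rwa [Matrix.mul_inv_rev, Matrix.mul_inv_rev, Matrix.nonsing_inv_nonsing_inv _ hJdet] at h4
  ext g
  simp only [Set.mem_setOf_eq]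
  constructor
  · rintro ⟨hu, hrev⟩
    have hgdet : IsUnit g.det := (Matrix.isUnit_iff_isUnit_det g).mp hu
    have hgJ : g * jordanBlock mu n = (jordanBlock mu n)⁻¹ * g := by
      have h4 := congrArg (fun M => M * g) hrev
      rwa [Matrix.mul_assoc (g * jordanBlock mu n), Matrix.nonsing_inv_mul _ hgdet,
        Matrix.mul_one] at h4
    have hJg : jordanBlock mu n * g = g * (jordanBlock mu n)⁻¹ := by
      have h5 : jordanBlock mu n * (g * jordanBlock mu n) = g := by
        rw [hgJ, ← Matrix.mul_assoc, Matrix.mul_nonsing_inv _ hJdet, Matrix.one_mul]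
      have h6 := congrArg (fun M => M * (jordanBlock mu n)⁻¹) h5
      rwa [Matrix.mul_assoc, Matrix.mul_assoc, Matrix.mul_nonsing_inv _ hJdet,
        Matrix.mul_one] at h6
    have hcomm : (g * (Omega mu n)⁻¹) * jordanBlock mu n
        = jordanBlock mu n * (g * (Omega mu n)⁻¹) := by
      calc (g * (Omega mu n)⁻¹) * jordanBlock mu n
          = g * ((Omega mu n)⁻¹ * jordanBlock mu n) := Matrix.mul_assoc _ _ _
        _ = g * ((jordanBlock mu n)⁻¹ * (Omega mu n)⁻¹) := by rw [← hOJinv]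
        _ = (g * (jordanBlock mu n)⁻¹) * (Omega mu n)⁻¹ := (Matrix.mul_assoc _ _ _).symm
        _ = (jordanBlock mu n * g) * (Omega mu n)⁻¹ := by rw [← hJg]
        _ = jordanBlock mu n * (g * (Omega mu n)⁻¹) := Matrix.mul_assoc _ _ _
    have hT := comm_J_toep hcomm hn
    refine ⟨fun k => (g * (Omega mu n)⁻¹) ⟨0, hn⟩ k, ?_, ?_⟩
    · have hdet : (g * (Omega mu n)⁻¹).det ≠ 0 := by
        rw [Matrix.det_mul]
        exact mul_ne_zero hgdet.ne_zero (Matrix.isUnit_nonsing_inv_det _ hOdet).ne_zero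
      rw [hT, det_toep hn] at hdet
      show (g * (Omega mu n)⁻¹) ⟨0, hn⟩ ⟨0, hn⟩ ≠ 0
      intro h0
      exact hdet (by rw [h0]; exact zero_pow (by omega))
    · have h7 : g * (Omega mu n)⁻¹ * Omega mu n = g := by
        rw [Matrix.mul_assoc, Matrix.nonsing_inv_mul _ hOdet, Matrix.mul_one]
      conv_lhs => rw [← h7, hT]
  · rintro ⟨x, hx0, rfl⟩
    have htdet : (toep x).det ≠ 0 := by rw [det_toep hn]; exact pow_ne_zero _ hx0
    have hgu : IsUnit (toep x * Omega mu n) := by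
      rw [Matrix.isUnit_iff_isUnit_det, Matrix.det_mul]
      exact isUnit_iff_ne_zero.mpr (mul_ne_zero htdet (det_Omega_ne h2))
    refine ⟨hgu, ?_⟩
    have hcJ : toep x * jordanBlock mu n = jordanBlock mu n * toep x := toep_comm_J x
    have hcJinv : toep x * (jordanBlock mu n)⁻¹ = (jordanBlock mu n)⁻¹ * toep x := by
      calc toep x * (jordanBlock mu n)⁻¹
          = (jordanBlock mu n)⁻¹ * (jordanBlock mu n * (toep x * (jordanBlock mu n)⁻¹)) := by
            rw [← Matrix.mul_assoc, Matrix.nonsing_inv_mul _ hJdet, Matrix.one_mul]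
        _ = (jordanBlock mu n)⁻¹ * ((jordanBlock mu n * toep x) * (jordanBlock mu n)⁻¹) := by
            rw [Matrix.mul_assoc]
        _ = (jordanBlock mu n)⁻¹ * ((toep x * jordanBlock mu n) * (jordanBlock mu n)⁻¹) := by
            rw [hcJ]
        _ = (jordanBlock mu n)⁻¹ * (toep x * (jordanBlock mu n * (jordanBlock mu n)⁻¹)) := by
            rw [Matrix.mul_assoc]
        _ = (jordanBlock mu n)⁻¹ * toep x := by
            rw [Matrix.mul_nonsing_inv _ hJdet, Matrix.mul_one]
    have hmain : (toep x * Omega mu n) * jordanBlock mu n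
        = (jordanBlock mu n)⁻¹ * (toep x * Omega mu n) := by
      calc (toep x * Omega mu n) * jordanBlock mu n
          = toep x * (Omega mu n * jordanBlock mu n) := Matrix.mul_assoc _ _ _
        _ = toep x * ((jordanBlock mu n)⁻¹ * Omega mu n) := by rw [hOJ]
        _ = (toep x * (jordanBlock mu n)⁻¹) * Omega mu n := (Matrix.mul_assoc _ _ _).symm
        _ = ((jordanBlock mu n)⁻¹ * toep x) * Omega mu n := by rw [hcJinv]
        _ = (jordanBlock mu n)⁻¹ * (toep x * Omega mu n) := Matrix.mul_assoc _ _ _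
    have hgdet2 : IsUnit ((toep x * Omega mu n)).det := (Matrix.isUnit_iff_isUnit_det _).mp hgu
    rw [hmain, Matrix.mul_assoc, Matrix.mul_nonsing_inv _ hgdet2, Matrix.mul_one]
end

section
/- Let μ ∈ {1,−1} and n ≥ 1, and let g ∈ GL(n,ℂ) be an involution with g·J(μ,n)·g⁻¹ = (J(μ,n))⁻¹. Then: if n ≡ 0 (mod 4) then det(g) = 1, and if n ≡ 2 (mod 4) then det(g) = −1. -/
/-- The nilpotent shift matrix. -/
noncomputable def shiftM (n : ℕ) : Matrix (Fin n) (Fin n) ℂ :=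
  Matrix.of fun i j => if (j : ℕ) = (i : ℕ) + 1 then 1 else 0

/-- Extension of a matrix to `ℕ × ℕ`, zero outside the range. -/
noncomputable def ext2 {n : ℕ} (g : Matrix (Fin n) (Fin n) ℂ) (a b : ℕ) : ℂ :=
  if h : a < n ∧ b < n then g ⟨a, h.1⟩ ⟨b, h.2⟩ else 0

lemma ext2_apply {n : ℕ} (g : Matrix (Fin n) (Fin n) ℂ) (i j : Fin n) :
    ext2 g (i : ℕ) (j : ℕ) = g i j := by
  rw [ext2, dif_pos ⟨i.isLt, j.isLt⟩]

lemma ext2_of_ge {n : ℕ} (g : Matrix (Fin n) (Fin n) ℂ) {a b : ℕ}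
    (h : n ≤ a ∨ n ≤ b) : ext2 g a b = 0 := by
  rw [ext2, dif_neg]; omega

lemma jordan_eq (mu : ℂ) (n : ℕ) :
    jordanBlock mu n = mu • (1 : Matrix (Fin n) (Fin n) ℂ) + shiftM n := by
  ext i j
  simp only [jordanBlock, shiftM, Matrix.of_apply, Matrix.add_apply, Matrix.smul_apply,
    Matrix.one_apply, smul_eq_mul]
  by_cases h : (j : ℕ) = (i : ℕ)
  · have h' : j = i := Fin.ext h
    have h2 : ¬ ((j : ℕ) = (i : ℕ) + 1) := by omega
    simp [h, h', h2]
  · have h' : ¬ j = i := fun hh => h (by rw [hh])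
    have h'' : ¬ i = j := fun hh => h (by rw [hh])
    simp [h, h', h'']

lemma shift_mul {n : ℕ} (M : Matrix (Fin n) (Fin n) ℂ) (i j : Fin n) :
    (shiftM n * M) i j = ext2 M ((i : ℕ) + 1) (j : ℕ) := by
  rw [Matrix.mul_apply]
  by_cases h : (i : ℕ) + 1 < n
  · rw [ext2, dif_pos ⟨h, j.isLt⟩]
    rw [Finset.sum_eq_single (⟨(i : ℕ) + 1, h⟩ : Fin n)]
    · rw [shiftM, Matrix.of_apply, if_pos rfl, one_mul]
    · intro b _ hb
      have : ¬ ((b : ℕ) = (i : ℕ) + 1) := fun hh => hb (Fin.ext hh)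
      simp [shiftM, this]
    · simp
  · rw [ext2_of_ge M (Or.inl (by omega))]
    apply Finset.sum_eq_zero
    intro k _
    have : ¬ ((k : ℕ) = (i : ℕ) + 1) := by have := k.isLt; omega
    simp [shiftM, this]

lemma mul_shift {n : ℕ} (M : Matrix (Fin n) (Fin n) ℂ) (i j : Fin n) :
    (M * shiftM n) i j = if (j : ℕ) = 0 then 0 else ext2 M (i : ℕ) ((j : ℕ) - 1) := by
  rw [Matrix.mul_apply]
  by_cases h : (j : ℕ) = 0
  · rw [if_pos h]
    apply Finset.sum_eq_zero
    intro k _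
    have : ¬ ((j : ℕ) = (k : ℕ) + 1) := by omega
    simp [shiftM, this]
  · rw [if_neg h]
    have hlt : (j : ℕ) - 1 < n := by have := j.isLt; omega
    rw [ext2, dif_pos ⟨i.isLt, hlt⟩]
    rw [Finset.sum_eq_single (⟨(j : ℕ) - 1, hlt⟩ : Fin n)]
    · rw [shiftM, Matrix.of_apply, if_pos (by simp; omega), mul_one]
    · intro b _ hb
      have : ¬ ((j : ℕ) = (b : ℕ) + 1) := by
        intro hh
        exact hb (Fin.ext (show (b : ℕ) = (j : ℕ) - 1 by omega))
      simp [shiftM, this]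
    · simp

section Rec

variable {n : ℕ} (mu : ℂ) (g : Matrix (Fin n) (Fin n) ℂ)

/-- Triangularity from the recurrences. -/
lemma tri_of_rec (hmun : mu ≠ 0)
    (hkey : ∀ a b : ℕ, b + 1 < n →
      mu * ext2 g (a + 1) (b + 1) + mu * ext2 g a b + ext2 g (a + 1) b = 0)
    (hcol : ∀ a : ℕ, 1 ≤ a → ext2 g a 0 = 0) :
    ∀ b a : ℕ, b < a → ext2 g a b = 0 := by
  intro b
  induction b with
  | zero => intro a ha; exact hcol a ha
  | succ b ih =>
    intro a ha
    by_cases han : a < n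
    · have ha1 : 1 ≤ a := by omega
      have hb1 : b + 1 < n := by omega
      have hrec := hkey (a - 1) b hb1
      rw [Nat.sub_add_cancel ha1] at hrec
      rw [ih (a - 1) (by omega), ih a (by omega)] at hrec
      have : mu * ext2 g a (b + 1) = 0 := by linear_combination hrec
      exact (mul_eq_zero.mp this).resolve_left hmun
    · exact ext2_of_ge g (Or.inl (by omega))

lemma diag_of_rec (hmun : mu ≠ 0) (hmu2 : mu * mu = 1)
    (hkey : ∀ a b : ℕ, b + 1 < n →
      mu * ext2 g (a + 1) (b + 1) + mu * ext2 g a b + ext2 g (a + 1) b = 0)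
    (hcol : ∀ a : ℕ, 1 ≤ a → ext2 g a 0 = 0) :
    ∀ b : ℕ, b + 1 < n → ext2 g (b + 1) (b + 1) = - ext2 g b b := by
  intro b hb
  have hrec := hkey b b hb
  rw [tri_of_rec mu g hmun hkey hcol b (b + 1) (by omega)] at hrec
  have h3 : mu * (ext2 g (b + 1) (b + 1) + ext2 g b b) = 0 := by
    linear_combination hrec
  have h4 : ext2 g (b + 1) (b + 1) + ext2 g b b = 0 :=
    (mul_eq_zero.mp h3).resolve_left hmun
  linear_combination h4
  
end Rec

/-- If `g ∈ GL(n, ℂ)` is an involution reversing `J(μ, n)` with `μ ∈ {1, -1}`, then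
`det g = 1` when `n ≡ 0 (mod 4)` and `det g = -1` when `n ≡ 2 (mod 4)`. -/
theorem det_involution_reversing_jordanBlock {n : ℕ} (hn : 1 ≤ n)
    (mu : ℂ) (hmu : mu = 1 ∨ mu = -1) (g : Matrix (Fin n) (Fin n) ℂ)
    (hg2 : g * g = 1)
    (hrev : g * jordanBlock mu n * g⁻¹ = (jordanBlock mu n)⁻¹) :
    (n % 4 = 0 → g.det = 1) ∧ (n % 4 = 2 → g.det = -1) := by
  have hmu2 : mu * mu = 1 := by rcases hmu with h | h <;> rw [h] <;> ring
  have hmun : mu ≠ 0 := by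
    intro h; rw [h, mul_zero] at hmu2; exact zero_ne_one hmu2
  set J := jordanBlock mu n with hJdef
  set S := shiftM n with hSdef
  -- J is upper triangular with diagonal mu, hence invertible
  have hJtri : J.BlockTriangular id := by
    intro i j hij
    have hij' : (j : ℕ) < (i : ℕ) := hij
    show jordanBlock mu n i j = 0
    rw [jordanBlock, Matrix.of_apply, if_neg (by omega), if_neg (by omega)]
  have hdetJ : J.det = mu ^ n := by
    rw [Matrix.det_of_upperTriangular hJtri]
    have : ∀ i : Fin n, J i i = mu := by
      intro i; show jordanBlock mu n i i = mu
      rw [jordanBlock, Matrix.of_apply, if_pos rfl]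
    rw [Finset.prod_congr rfl (fun i _ => this i)]
    simp
  have hJunit : IsUnit J.det := by
    rw [hdetJ]; exact isUnit_iff_ne_zero.mpr (pow_ne_zero _ hmun)
  have hginv : g⁻¹ = g := Matrix.inv_eq_right_inv hg2
  rw [hginv] at hrev
  have h1 : J * (g * J * g) = 1 := by rw [hrev, Matrix.mul_nonsing_inv _ hJunit]
  have hJgJ : J * g * J = g := by
    calc J * g * J = J * g * J * (g * g) := by rw [hg2, mul_one]
    _ = J * (g * J * g) * g := by noncomm_ring
    _ = g := by rw [h1, one_mul]
  -- expand J = mu • 1 + S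
  have hexp : J * g * J
      = (mu * mu) • g + (mu • (S * g) + (mu • (g * S) + S * g * S)) := by
    rw [hJdef, hSdef, jordan_eq mu n]
    simp only [Matrix.add_mul, Matrix.mul_add, Matrix.smul_mul, Matrix.mul_smul,
      Matrix.one_mul, Matrix.mul_one, smul_smul, smul_add]
    abel
  have hkeyM : mu • (S * g) + (mu • (g * S) + S * g * S) = 0 := by
    have h2 := hexp.symm.trans hJgJ
    rw [hmu2, one_smul] at h2
    exact add_eq_left.mp h2
  -- entrywise key relation
  have hE : ∀ i j : Fin n,
      mu * ext2 g ((i : ℕ) + 1) (j : ℕ)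
      + (mu * (if (j : ℕ) = 0 then 0 else ext2 g (i : ℕ) ((j : ℕ) - 1))
        + (if (j : ℕ) = 0 then 0 else ext2 g ((i : ℕ) + 1) ((j : ℕ) - 1))) = 0 := by
    intro i j
    have hSg : ∀ (i : Fin n) (b : ℕ),
        ext2 (shiftM n * g) (i : ℕ) b = ext2 g ((i : ℕ) + 1) b := by
      intro i b
      by_cases hb : b < n
      · rw [ext2, dif_pos ⟨i.isLt, hb⟩]
        exact shift_mul g i ⟨b, hb⟩
      · rw [ext2_of_ge _ (Or.inr (by omega)), ext2_of_ge _ (Or.inr (by omega))]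
    have h3 := congrFun (congrFun hkeyM i) j
    simp only [Matrix.add_apply, Matrix.smul_apply, Matrix.zero_apply, smul_eq_mul] at h3
    rw [hSdef, shift_mul, mul_shift, mul_shift] at h3
    simp only [hSg] at h3
    exact h3
  have hkey : ∀ a b : ℕ, b + 1 < n →
      mu * ext2 g (a + 1) (b + 1) + mu * ext2 g a b + ext2 g (a + 1) b = 0 := by
    intro a b hb
    by_cases ha : a < n
    · have h4 := hE ⟨a, ha⟩ ⟨b + 1, hb⟩
      simp only [if_neg (Nat.succ_ne_zero b), Nat.add_sub_cancel] at h4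
      linear_combination h4
    · rw [ext2_of_ge g (Or.inl (by omega)), ext2_of_ge g (Or.inl (by omega)),
        ext2_of_ge g (Or.inl (by omega))]
      ring
  have hcol : ∀ a : ℕ, 1 ≤ a → ext2 g a 0 = 0 := by
    intro a ha
    by_cases han : a < n
    · have h5 := hE ⟨a - 1, by omega⟩ ⟨0, by omega⟩
      simp only [if_pos rfl, mul_zero, add_zero] at h5
      have : (a - 1) + 1 = a := by omega
      rw [this] at h5
      simpa [hmun] using h5
    · exact ext2_of_ge g (Or.inl (by omega))
  have htri := tri_of_rec mu g hmun hkey hcol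
  have hdiag := diag_of_rec mu g hmun hmu2 hkey hcol
  -- g is upper triangular
  have hgtri : g.BlockTriangular id := by
    intro i j hij
    have := htri (j : ℕ) (i : ℕ) hij
    rwa [ext2_apply] at this
  have hdetg : g.det = ∏ i : Fin n, g i i := Matrix.det_of_upperTriangular hgtri
  -- diagonal entries
  have hdiagN : ∀ m : ℕ, m < n → ext2 g m m = (-1) ^ m * ext2 g 0 0 := by
    intro m
    induction m with
    | zero => intro _; rw [pow_zero, one_mul]
    | succ m ih =>
      intro hm
      rw [hdiag m hm, ih (by omega), pow_succ]
      ring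
  -- c := g 0 0 squares to 1
  set z : Fin n := ⟨0, hn⟩ with hzdef
  have hc2 : ext2 g 0 0 * ext2 g 0 0 = 1 := by
    have h6 := congrFun (congrFun hg2 z) z
    rw [Matrix.mul_apply, Matrix.one_apply_eq] at h6
    rw [Finset.sum_eq_single z ?_ (by simp)] at h6
    · have hz : ext2 g 0 0 = g z z := by
        rw [ext2, dif_pos ⟨hn, hn⟩]
      rw [hz]; exact h6
    · intro b _ hb
      have hb0 : 0 < (b : ℕ) := by
        rcases Nat.eq_zero_or_pos (b : ℕ) with h | h
        · exact absurd (Fin.ext (h.trans rfl.symm) : b = z) hb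
        · exact h
      have : g b z = 0 := by
        have := htri (z : ℕ) (b : ℕ) hb0
        rwa [ext2_apply] at this
      rw [this, mul_zero]
  -- compute the determinant
  have hprod : g.det = (-1 : ℂ) ^ (∑ i : Fin n, (i : ℕ)) * (ext2 g 0 0) ^ n := by
    rw [hdetg]
    have : ∀ i : Fin n, g i i = (-1 : ℂ) ^ (i : ℕ) * ext2 g 0 0 := by
      intro i
      have := hdiagN (i : ℕ) i.isLt
      rwa [ext2_apply] at this
    rw [Finset.prod_congr rfl (fun i _ => this i), Finset.prod_mul_distrib,
      Finset.prod_pow_eq_pow_sum, Finset.prod_const, Finset.card_univ, Fintype.card_fin]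
  have hsum2 : (∑ i : Fin n, (i : ℕ)) * 2 = n * (n - 1) := by
    rw [Fin.sum_univ_eq_sum_range (fun i => i) n]
    exact Finset.sum_range_id_mul_two n
  have hcpow : ∀ m : ℕ, ext2 g 0 0 ^ (2 * m) = 1 := by
    intro m
    rw [pow_mul, pow_two, hc2, one_pow]
  have hcn : ∀ m : ℕ, n = 2 * m → ext2 g 0 0 ^ n = 1 := fun m hm =>
    (congrArg (fun t => ext2 g 0 0 ^ t) hm).trans (hcpow m)
  obtain ⟨m, hm⟩ : ∃ m, n - 1 = m := ⟨n - 1, rfl⟩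
  rw [hm] at hsum2
  constructor
  · intro h4
    obtain ⟨k, hk⟩ : ∃ k, n = 4 * k := ⟨n / 4, by omega⟩
    have h5 : (∑ i : Fin n, (i : ℕ)) * 2 = (2 * (k * m)) * 2 := by
      rw [hsum2, hk]; ring
    have hsE : Even (∑ i : Fin n, (i : ℕ)) :=
      ⟨k * m, by have := Nat.eq_of_mul_eq_mul_right (by norm_num) h5; omega⟩
    rw [hprod, hsE.neg_one_pow, hcn (2 * k) (by omega), one_mul]
  · intro h4
    obtain ⟨k, hk⟩ : ∃ k, n = 4 * k + 2 := ⟨n / 4, by omega⟩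
    have hm' : m = 4 * k + 1 := by omega
    have h5 : (∑ i : Fin n, (i : ℕ)) * 2 = ((2 * k + 1) * (4 * k + 1)) * 2 := by
      rw [hsum2, hk, hm']; ring
    have hsO : Odd (∑ i : Fin n, (i : ℕ)) := by
      rw [Nat.eq_of_mul_eq_mul_right (by norm_num : 0 < 2) h5]
      exact Odd.mul (⟨k, by ring⟩ : Odd (2 * k + 1)) (⟨2 * k, by ring⟩ : Odd (4 * k + 1))
    rw [hprod, hsO.neg_one_pow, hcn (2 * k + 1) (by omega), mul_one]
end

section
/- Let λ ∈ ℂ∖{0,1,−1} and n ≥ 1, let A = J(λ,n) ⊕ J(λ⁻¹,n) ∈ GL(2n,ℂ) (block diagonal), and let g ∈ GL(2n,ℂ) be an involution with gAg⁻¹ = A⁻¹. Then det(g) = (−1)ⁿ. -/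
lemma jordan_decomp (lam : ℂ) (n : ℕ) :
    jordanBlock lam n = lam • (1 : Matrix (Fin n) (Fin n) ℂ) + jordanBlock 0 n := by
  ext i j
  simp only [jordanBlock, Matrix.of_apply, Matrix.add_apply, Matrix.smul_apply,
    Matrix.one_apply, smul_eq_mul]
  rcases eq_or_ne (j : ℕ) (i : ℕ) with h | h
  · have : i = j := Fin.ext h.symm
    subst this
    simp [h]
  · have : i ≠ j := fun hh => h (by rw [hh])
    simp [h, this]

lemma shift_pow (n k : ℕ) (i j : Fin n) :
    ((jordanBlock 0 n) ^ k) i j = if (j : ℕ) = (i : ℕ) + k then 1 else 0 := by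
  induction k generalizing i j with
  | zero =>
    simp [Matrix.one_apply, Fin.ext_iff, eq_comm]
  | succ k ih =>
    rw [pow_succ, Matrix.mul_apply]
    by_cases hik : (i : ℕ) + k < n
    · set l0 : Fin n := ⟨(i : ℕ) + k, hik⟩ with hl0
      have : ∀ l : Fin n, ((jordanBlock 0 n) ^ k) i l * (jordanBlock 0 n) l j
          = if l = l0 then (if (j : ℕ) = (i : ℕ) + (k+1) then 1 else 0) else 0 := by
        intro l
        rw [ih]
        simp only [jordanBlock, Matrix.of_apply]
        rcases eq_or_ne l l0 with h | h
        · subst h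
          simp only [hl0, if_pos rfl]
          split_ifs <;> simp_all <;> omega
        · have : (l : ℕ) ≠ (i : ℕ) + k := fun hh => h (Fin.ext hh)
          simp [this, h]
      rw [Finset.sum_congr rfl (fun l _ => this l), Finset.sum_ite_eq' Finset.univ l0]
      simp
    · have hj : ¬ ((j : ℕ) = (i : ℕ) + (k+1)) := by omega
      rw [if_neg hj]
      apply Finset.sum_eq_zero
      intro l _
      rw [ih]
      have : (l : ℕ) ≠ (i : ℕ) + k := by omega
      simp [this]

lemma shift_pow_eq_zero (n m : ℕ) (hm : n ≤ m) : (jordanBlock 0 n) ^ m = 0 := by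
  ext i j
  rw [shift_pow]
  have : ¬ ((j : ℕ) = (i : ℕ) + m) := by omega
  simp [this]


lemma key_vanish {n : ℕ} (mu : ℂ) (hmu : mu * mu ≠ 1) (P : Matrix (Fin n) (Fin n) ℂ)
    (h : jordanBlock mu n * P * jordanBlock mu n = P) : P = 0 := by
  set N := jordanBlock 0 n with hN
  have h4 : (mu * mu) • P + mu • (N * P) + mu • (P * N) + N * (P * N) = P := by
    have expand : jordanBlock mu n * P * jordanBlock mu n
        = (mu * mu) • P + mu • (N * P) + mu • (P * N) + N * (P * N) := by
      rw [jordan_decomp]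
      simp only [add_mul, mul_add, Matrix.smul_mul, Matrix.mul_smul, one_mul, mul_one,
        smul_smul, mul_assoc]
      abel
    exact expand.symm.trans h
  have claim : ∀ t : ℕ, ∀ i j : ℕ, 2 * n ≤ i + j + t → N ^ i * (P * N ^ j) = 0 := by
    intro t
    induction t with
    | zero =>
      intro i j hij
      rcases (by omega : n ≤ i ∨ n ≤ j) with hi | hj
      · rw [shift_pow_eq_zero n i hi, zero_mul]
      · rw [shift_pow_eq_zero n j hj, mul_zero, mul_zero]
    | succ t ih =>
      intro i j hij
      have e1 : N ^ i * (N * (P * N ^ j)) = 0 := by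
        have := ih (i + 1) j (by omega)
        rwa [pow_succ, mul_assoc] at this
      have e2 : N ^ i * (P * (N * N ^ j)) = 0 := by
        have := ih i (j + 1) (by omega)
        rwa [pow_succ'] at this
      have e3 : N ^ i * (N * (P * (N * N ^ j))) = 0 := by
        have := ih (i + 1) (j + 1) (by omega)
        rwa [pow_succ, pow_succ', mul_assoc] at this
      have hmain : N ^ i * (P * N ^ j) = (mu * mu) • (N ^ i * (P * N ^ j)) := by
        conv_lhs => rw [← h4]
        simp only [mul_add, add_mul, Matrix.mul_smul, Matrix.smul_mul, mul_assoc,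
          e1, e2, e3, smul_zero, add_zero]
      have : (1 - mu * mu) • (N ^ i * (P * N ^ j)) = 0 := by
        rw [sub_smul, one_smul, ← hmain, sub_self]
      rcases smul_eq_zero.mp this with h' | h'
      · exact absurd (by linear_combination -h' : mu * mu = 1) hmu
      · exact h'
  have := claim (2 * n) 0 0 (by omega)
  simpa using this


lemma det_jordan (mu : ℂ) (n : ℕ) : (jordanBlock mu n).det = mu ^ n := by
  have : (jordanBlock mu n).BlockTriangular id := by
    intro i j hij
    simp only [jordanBlock, Matrix.of_apply]
    have h1 : (j : ℕ) ≠ (i : ℕ) := by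
      simp only [id] at hij; omega
    have h2 : (j : ℕ) ≠ (i : ℕ) + 1 := by
      simp only [id] at hij; omega
    simp [h1, h2]
  rw [Matrix.det_of_upperTriangular this]
  simp [jordanBlock]

lemma det_swap_blocks (n : ℕ) :
    (Matrix.fromBlocks (0 : Matrix (Fin n) (Fin n) ℂ) (1 : Matrix (Fin n) (Fin n) ℂ) (1 : Matrix (Fin n) (Fin n) ℂ) (0 : Matrix (Fin n) (Fin n) ℂ)).det = (-1) ^ n := by
  have factor : (Matrix.fromBlocks (0 : Matrix (Fin n) (Fin n) ℂ) (1 : Matrix (Fin n) (Fin n) ℂ) (1 : Matrix (Fin n) (Fin n) ℂ) (0 : Matrix (Fin n) (Fin n) ℂ))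
      = Matrix.fromBlocks 1 (1 : Matrix (Fin n) (Fin n) ℂ) 0 1 * Matrix.fromBlocks 1 0 (-1) 1 * Matrix.fromBlocks 1 1 0 1
        * Matrix.fromBlocks (-1) 0 0 1 := by
    simp [Matrix.fromBlocks_multiply]
  rw [factor, Matrix.det_mul, Matrix.det_mul, Matrix.det_mul,
    Matrix.det_fromBlocks_zero₂₁, Matrix.det_fromBlocks_zero₁₂, Matrix.det_fromBlocks_zero₂₁]
  simp [Matrix.det_neg]

/-- If `λ ∉ {0, 1, -1}`, `A = J(λ,n) ⊕ J(λ⁻¹,n)` (block diagonal, realized over the index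
type `Fin n ⊕ Fin n`), and `g ∈ GL(2n, ℂ)` is an involution with `g A g⁻¹ = A⁻¹`, then
`det g = (-1)ⁿ`. -/
theorem det_involution_reversing_jordan_pair {n : ℕ} (hn : 1 ≤ n) (lam : ℂ)
    (hlam0 : lam ≠ 0) (hlam1 : lam ≠ 1) (hlam2 : lam ≠ -1)
    (g : Matrix (Fin n ⊕ Fin n) (Fin n ⊕ Fin n) ℂ)
    (hg2 : g * g = 1)
    (hrev : g * Matrix.fromBlocks (jordanBlock lam n) 0 0 (jordanBlock lam⁻¹ n) * g⁻¹ =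
      (Matrix.fromBlocks (jordanBlock lam n) 0 0 (jordanBlock lam⁻¹ n))⁻¹) :
    g.det = (-1) ^ n := by
  set J := jordanBlock lam n with hJ
  set K := jordanBlock lam⁻¹ n with hK
  set A := Matrix.fromBlocks J 0 0 K with hA
  -- lam * lam ≠ 1
  have hll : lam * lam ≠ 1 := by
    intro h
    have : (lam - 1) * (lam + 1) = 0 := by ring_nf; linear_combination h
    rcases mul_eq_zero.mp this with h' | h'
    · exact hlam1 (by linear_combination h')
    · exact hlam2 (by linear_combination h')
  have hll' : lam⁻¹ * lam⁻¹ ≠ 1 := by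
    intro h
    apply hll
    have := congrArg (fun x => (lam * lam) * x) h
    simp only [mul_one] at this
    rw [← this]
    field_simp
  -- A is invertible
  have hdetA : A.det = 1 := by
    rw [hA, Matrix.det_fromBlocks_zero₁₂, hJ, hK, det_jordan, det_jordan, ← mul_pow,
      mul_inv_cancel₀ hlam0, one_pow]
  have hAunit : IsUnit A.det := by rw [hdetA]; exact isUnit_one
  -- g⁻¹ = g
  have hginv : g⁻¹ = g := Matrix.inv_eq_right_inv hg2
  rw [hginv] at hrev
  -- A * g = g * A⁻¹
  have h1 : A * g = g * A⁻¹ := by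
    calc A * g = (g * g) * A * g := by rw [hg2, one_mul]
    _ = g * (g * A * g) := by simp only [mul_assoc]
    _ = g * A⁻¹ := by rw [hrev]
  have hAgA : A * g * A = g := by
    rw [h1, mul_assoc, Matrix.nonsing_inv_mul A hAunit, mul_one]
  -- blocks of g
  set P := g.toBlocks₁₁ with hP
  set Q := g.toBlocks₁₂ with hQ
  set R := g.toBlocks₂₁ with hR
  set S := g.toBlocks₂₂ with hS
  have hgb : g = Matrix.fromBlocks P Q R S := (Matrix.fromBlocks_toBlocks g).symm
  have h2 := hAgA
  rw [hgb, hA] at h2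
  simp only [Matrix.fromBlocks_multiply, Matrix.mul_zero, Matrix.zero_mul, add_zero,
    zero_add, Matrix.mul_one, Matrix.one_mul] at h2
  have hPeq : J * P * J = P := by have := congrArg Matrix.toBlocks₁₁ h2; simpa using this
  have hSeq : K * S * K = S := by have := congrArg Matrix.toBlocks₂₂ h2; simpa using this
  have hP0 : P = 0 := key_vanish lam hll P hPeq
  have hS0 : S = 0 := key_vanish lam⁻¹ hll' S hSeq
  -- g² = 1 in blocks
  have h3 := hg2
  rw [hgb, hP0, hS0] at h3
  have hone : (1 : Matrix (Fin n ⊕ Fin n) (Fin n ⊕ Fin n) ℂ).toBlocks₂₂ = 1 := by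
    ext i j
    simp [Matrix.toBlocks₂₂, Matrix.one_apply, Sum.inr.injEq]
  simp only [Matrix.fromBlocks_multiply, Matrix.mul_zero, Matrix.zero_mul, add_zero,
    zero_add] at h3
  have hRQ : R * Q = 1 := by have := congrArg Matrix.toBlocks₂₂ h3; simpa [hone] using this
  -- factor g
  have hfac : g = Matrix.fromBlocks (0 : Matrix (Fin n) (Fin n) ℂ) 1 1 0
      * Matrix.fromBlocks R 0 0 Q := by
    rw [hgb, hP0, hS0]
    simp [Matrix.fromBlocks_multiply]
  rw [hfac, Matrix.det_mul, det_swap_blocks, Matrix.det_fromBlocks_zero₁₂, ← Matrix.det_mul,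
    hRQ, Matrix.det_one, mul_one]
end

section
/- Let λ ∈ ℂ∖{0,1,−1} and n ≥ 1, and let B = J(λ,n) ⊕ J(λ⁻¹,n) ∈ SL(2n,ℂ) (block diagonal). Then B is reversible in SL(2n,ℂ) for every n. Moreover, B is strongly reversible in SL(2n,ℂ) (a product of two involutions of SL(2n,ℂ)) if and only if n is even. -/
open Matrix

lemma mul_inv_mul_eq_inv_of_mul_mul_eq {M : Type*} [Monoid M] {a b : M} {u : Mˣ} (ha : IsUnit a)
    (h : a * u * b = u) : b * ↑u⁻¹ * a = ↑u⁻¹ := by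
  obtain ⟨a, rfl⟩ := ha
  have hb : b = ↑u⁻¹ * ↑a⁻¹ * u :=
    calc b = ↑u⁻¹ * ↑a⁻¹ * (a * u * b) := by simp [mul_assoc]
      _ = ↑u⁻¹ * ↑a⁻¹ * u := by rw [h]
  simp [hb, mul_assoc]

lemma exists_mul_self_eq_one_and_eq_mul_iff {G : Type*} [Group G] (b : G) :
    (∃ g₁ g₂ : G, g₁ * g₁ = 1 ∧ g₂ * g₂ = 1 ∧ b = g₁ * g₂) ↔
      ∃ g : G, g * g = 1 ∧ b * g * b = g := by
  constructor
  · rintro ⟨g₁, g₂, h₁, h₂, rfl⟩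
    refine ⟨g₁, h₁, ?_⟩
    calc g₁ * g₂ * g₁ * (g₁ * g₂) = g₁ * (g₂ * (g₁ * g₁) * g₂) := by group
      _ = g₁ := by rw [h₁, mul_one, h₂, mul_one]
  · rintro ⟨g, hg, hbg⟩
    refine ⟨g, g * b, hg, ?_, by rw [← mul_assoc, hg, one_mul]⟩
    rw [mul_assoc, ← mul_assoc b, hbg, hg]

lemma mul_mul_inv_eq_inv_of_mul_mul_eq {G : Type*} [Group G] {b g : G} (h : b * g * b = g) :
    g * b * g⁻¹ = b⁻¹ :=
  calc g * b * g⁻¹ = g * b * (b * g * b)⁻¹ := by rw [h]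
    _ = b⁻¹ := by group

theorem Matrix.det_fromBlocks_zero_zero {m R : Type*} [Fintype m] [DecidableEq m] [CommRing R]
    (B C : Matrix m m R) : (fromBlocks 0 B C 0).det = (-1) ^ Fintype.card m * (B.det * C.det) := by
  have hswap : (fromBlocks 0 1 1 0 : Matrix (m ⊕ m) (m ⊕ m) R).det = (-1) ^ Fintype.card m := by
    calc (fromBlocks 0 1 1 0 : Matrix (m ⊕ m) (m ⊕ m) R).det
        = (fromBlocks 0 1 1 0 * fromBlocks 1 0 1 1 : Matrix (m ⊕ m) (m ⊕ m) R).det := by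
          rw [det_mul, det_fromBlocks_zero₁₂, det_one, mul_one, mul_one]
      _ = (fromBlocks 1 1 1 0 : Matrix (m ⊕ m) (m ⊕ m) R).det := by simp [fromBlocks_multiply]
      _ = (-1) ^ Fintype.card m := by simp [det_fromBlocks_one₁₁, det_neg]
  rw [show fromBlocks 0 B C 0 = fromBlocks B 0 0 C * fromBlocks 0 1 1 0 by
      simp [fromBlocks_multiply], det_mul, det_fromBlocks_zero₂₁, hswap]
  ring

lemma Fin.sum_ite_val_eq {n : ℕ} {M : Type*} [AddCommMonoid M] (c : ℕ) (f : Fin n → M) :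
    (∑ k : Fin n, if (k : ℕ) = c then f k else 0) = if h : c < n then f ⟨c, h⟩ else 0 := by
  split_ifs with h
  · rw [Finset.sum_eq_single ⟨c, h⟩ (fun k _ hk => if_neg fun hc => hk (Fin.ext hc)) (by simp)]
    simp
  · exact Finset.sum_eq_zero fun k _ => if_neg fun hc => h (by omega)

namespace JordanPair

variable {n : ℕ}

lemma jordanBlock_zero_apply (i j : Fin n) :
    jordanBlock 0 n i j = if (j : ℕ) = i + 1 then 1 else 0 := by
  simp only [jordanBlock, of_apply]
  split_ifs <;> first | rfl | omega

lemma jordanBlock_eq_smul_one_add (μ : ℂ) : jordanBlock μ n = μ • 1 + jordanBlock 0 n := by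
  ext i j
  simp only [jordanBlock, Matrix.add_apply, Matrix.smul_apply, one_apply, of_apply, Fin.ext_iff,
    smul_eq_mul]
  split_ifs <;> first | omega | simp

lemma jordanBlock_zero_mul_apply (M : Matrix (Fin n) (Fin n) ℂ) (i j : Fin n) :
    (jordanBlock 0 n * M) i j = if h : (i : ℕ) + 1 < n then M ⟨i + 1, h⟩ j else 0 := by
  simp only [mul_apply, jordanBlock_zero_apply, ite_mul, one_mul, zero_mul, Fin.sum_ite_val_eq]

lemma mul_jordanBlock_zero_apply (M : Matrix (Fin n) (Fin n) ℂ) (i j : Fin n) :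
    (M * jordanBlock 0 n) i j = if h : 0 < (j : ℕ) then M i ⟨j - 1, by omega⟩ else 0 := by
  rw [mul_apply]
  split_ifs with hj
  · have hsummand (k : Fin n) : M i k * jordanBlock 0 n k j
        = if (k : ℕ) = j - 1 then M i k else 0 := by
      rw [jordanBlock_zero_apply]
      split_ifs <;> first | omega | simp
    simp only [hsummand, Fin.sum_ite_val_eq, dif_pos (show (j : ℕ) - 1 < n by omega)]
  · refine Finset.sum_eq_zero fun k _ => ?_
    rw [jordanBlock_zero_apply, if_neg (by omega), mul_zero]

lemma jordanBlock_zero_pow_apply (k : ℕ) (i j : Fin n) :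
    (jordanBlock 0 n ^ k) i j = if (j : ℕ) = i + k then 1 else 0 := by
  induction k generalizing j with
  | zero => simp [one_apply, Fin.ext_iff, eq_comm]
  | succ k ih =>
    rw [pow_succ, mul_jordanBlock_zero_apply]
    split_ifs <;> simp_all; omega

lemma jordanBlock_zero_pow_self : jordanBlock 0 n ^ n = 0 := by
  ext i j
  rw [jordanBlock_zero_pow_apply, if_neg (by omega), Matrix.zero_apply]

lemma isNilpotent_jordanBlock_zero : IsNilpotent (jordanBlock 0 n) :=
  ⟨n, jordanBlock_zero_pow_self⟩

lemma isUnit_smul_one_add_smul_jordanBlock_zero {a : ℂ} (ha : a ≠ 0) (b : ℂ) :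
    IsUnit (a • (1 : Matrix (Fin n) (Fin n) ℂ) + b • jordanBlock 0 n) :=
  (isNilpotent_jordanBlock_zero.smul b).isUnit_add_left_of_commute
    (isUnit_one.smul (Units.mk0 a ha))
    ((Commute.one_right _).smul_right a)

lemma eq_zero_of_jordanBlock_mul_mul_jordanBlock_eq {μ ν : ℂ} (hμν : μ * ν ≠ 1)
    {M : Matrix (Fin n) (Fin n) ℂ} (hM : jordanBlock μ n * M * jordanBlock ν n = M) : M = 0 := by
  set N := jordanBlock 0 n
  set J := jordanBlock ν n
  set E := 1 - μ • J
  have hE : IsUnit E := by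
    have hE' : E = (1 - μ * ν) • 1 + (-μ) • N := by
      simp only [E, J, N, jordanBlock_eq_smul_one_add ν]
      module
    exact hE' ▸ isUnit_smul_one_add_smul_jordanBlock_zero (sub_ne_zero.mpr hμν.symm) (-μ)
  have hEJ : Commute E J := ((Commute.one_left J).sub_left ((Commute.refl J).smul_left μ))
  have hNM : N * M * J = M * E := by
    rw [jordanBlock_eq_smul_one_add μ] at hM
    calc N * M * J = (μ • 1 + N) * M * J - μ • (M * J) := by
          simp only [add_mul, smul_mul_assoc, one_mul, add_sub_cancel_left]
      _ = M * E := by rw [hM, mul_sub, mul_one, mul_smul_comm]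
  have hpow (k : ℕ) : N ^ k * M * J ^ k = M * E ^ k := by
    induction k with
    | zero => simp
    | succ k ih =>
      calc N ^ (k + 1) * M * J ^ (k + 1) = N ^ k * (N * M * J) * J ^ k := by
            rw [pow_succ, pow_succ', mul_assoc, mul_assoc, mul_assoc, mul_assoc, mul_assoc]
        _ = N ^ k * M * J ^ k * E := by
            rw [hNM, mul_assoc, mul_assoc, (hEJ.pow_right k).eq, mul_assoc, mul_assoc]
        _ = M * E ^ (k + 1) := by rw [ih, pow_succ, mul_assoc]
  have h0 := hpow n
  rwa [jordanBlock_zero_pow_self, zero_mul, zero_mul, eq_comm, (hE.pow n).mul_left_eq_zero] at h0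

noncomputable def powDiagonal (c : ℂ) (n : ℕ) : Matrix (Fin n) (Fin n) ℂ :=
  diagonal fun i => c ^ (i : ℕ)

lemma jordanBlock_zero_mul_powDiagonal (c : ℂ) :
    jordanBlock 0 n * powDiagonal c n = c • (powDiagonal c n * jordanBlock 0 n) := by
  ext i j
  simp only [powDiagonal, mul_diagonal, diagonal_mul, Matrix.smul_apply, jordanBlock_zero_apply,
    smul_eq_mul]
  split_ifs with h
  · rw [h]; ring
  · simp

lemma jordanBlock_mul_powDiagonal (c : ℂ) :
    jordanBlock c n * powDiagonal c n = c • (powDiagonal c n * jordanBlock 1 n) := by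
  rw [jordanBlock_eq_smul_one_add c, jordanBlock_eq_smul_one_add 1, add_mul,
    jordanBlock_zero_mul_powDiagonal, mul_add, smul_add, one_smul, mul_one, smul_one_mul]

lemma powDiagonal_mul_jordanBlock_inv {c : ℂ} (hc : c ≠ 0) :
    powDiagonal c n * jordanBlock c⁻¹ n = c⁻¹ • (jordanBlock 1 n * powDiagonal c n) := by
  rw [jordanBlock_eq_smul_one_add c⁻¹, jordanBlock_eq_smul_one_add 1, mul_add, add_mul,
    jordanBlock_zero_mul_powDiagonal, smul_add, smul_smul, inv_mul_cancel₀ hc, one_smul,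
    one_smul, mul_smul_comm, mul_one, one_mul]

lemma jordanBlock_mul_mul_jordanBlock_inv_of_jordanBlock_one {c : ℂ} (hc : c ≠ 0)
    {T : Matrix (Fin n) (Fin n) ℂ} (hT : jordanBlock 1 n * T * jordanBlock 1 n = T) :
    jordanBlock c n * (powDiagonal c n * T * powDiagonal c n) * jordanBlock c⁻¹ n
      = powDiagonal c n * T * powDiagonal c n :=
  calc jordanBlock c n * (powDiagonal c n * T * powDiagonal c n) * jordanBlock c⁻¹ n
      = (jordanBlock c n * powDiagonal c n) * T * (powDiagonal c n * jordanBlock c⁻¹ n) := by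
        simp only [mul_assoc]
    _ = (c⁻¹ * c) •
          (powDiagonal c n * (jordanBlock 1 n * T * jordanBlock 1 n) * powDiagonal c n) := by
        rw [jordanBlock_mul_powDiagonal, powDiagonal_mul_jordanBlock_inv hc]
        simp only [smul_mul_assoc, mul_smul_comm, smul_smul, mul_assoc]
    _ = powDiagonal c n * T * powDiagonal c n := by rw [inv_mul_cancel₀ hc, one_smul, hT]

lemma isUnit_powDiagonal {c : ℂ} (hc : c ≠ 0) : IsUnit (powDiagonal c n) :=
  isUnit_diagonal.mpr (Pi.isUnit_iff.mpr fun _ => (pow_ne_zero _ hc).isUnit)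

/-- The matrix of `f(x) ↦ f(-1-x)` on polynomials of degree `< n` in the basis `C(x, j)`, in
which `J(1, n)` is the matrix of `f(x) ↦ f(x+1)`; hence it conjugates `J(1, n)` to its inverse. -/
noncomputable def signedPascal (n : ℕ) : Matrix (Fin n) (Fin n) ℂ :=
  of fun i j => (-1) ^ (j : ℕ) * ((j : ℕ).choose i : ℂ)

lemma jordanBlock_one_mul_signedPascal_mul_jordanBlock_one :
    jordanBlock 1 n * signedPascal n * jordanBlock 1 n = signedPascal n := by
  suffices h : jordanBlock 0 n * signedPascal n + signedPascal n * jordanBlock 0 n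
      + jordanBlock 0 n * signedPascal n * jordanBlock 0 n = 0 by
    rw [jordanBlock_eq_smul_one_add, one_smul]
    calc (1 + jordanBlock 0 n) * signedPascal n * (1 + jordanBlock 0 n)
        = signedPascal n + (jordanBlock 0 n * signedPascal n + signedPascal n * jordanBlock 0 n
          + jordanBlock 0 n * signedPascal n * jordanBlock 0 n) := by noncomm_ring
      _ = signedPascal n := by rw [h, add_zero]
  ext i j
  simp only [Matrix.add_apply, mul_jordanBlock_zero_apply, jordanBlock_zero_mul_apply,
    Matrix.zero_apply, signedPascal, of_apply]
  split_ifs with hi hj hj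
  · obtain ⟨j', hj'⟩ : ∃ j', (j : ℕ) = j' + 1 := ⟨(j : ℕ) - 1, by omega⟩
    simp only [hj', add_tsub_cancel_right, Nat.choose_succ_succ', pow_succ]
    push_cast
    ring
  · simp [Nat.choose_eq_zero_of_lt (show (j : ℕ) < i + 1 by omega)]
  · simp [Nat.choose_eq_zero_of_lt (show (j : ℕ) - 1 < i by omega)]
  · simp

lemma isUnit_signedPascal : IsUnit (signedPascal n) := by
  have htri : (signedPascal n).IsUpperTriangular := fun i j hij => by
    simp [signedPascal, Nat.choose_eq_zero_of_lt (show (j : ℕ) < i from hij)]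
  rw [isUnit_iff_isUnit_det, det_of_isUpperTriangular htri, isUnit_iff_ne_zero]
  exact Finset.prod_ne_zero_iff.mpr fun i _ => by simp [signedPascal]

lemma isUnit_jordanBlock {μ : ℂ} (hμ : μ ≠ 0) : IsUnit (jordanBlock μ n) := by
  simpa [← jordanBlock_eq_smul_one_add] using isUnit_smul_one_add_smul_jordanBlock_zero hμ 1

lemma exists_isUnit_jordanBlock_mul_mul_jordanBlock_inv_eq {μ : ℂ} (hμ : μ ≠ 0) :
    ∃ S : Matrix (Fin n) (Fin n) ℂ, IsUnit S ∧ jordanBlock μ n * S * jordanBlock μ⁻¹ n = S :=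
  ⟨_, ((isUnit_powDiagonal hμ).mul isUnit_signedPascal).mul (isUnit_powDiagonal hμ),
    jordanBlock_mul_mul_jordanBlock_inv_of_jordanBlock_one hμ
      jordanBlock_one_mul_signedPascal_mul_jordanBlock_one⟩

noncomputable def jordanPair (lam : ℂ) (n : ℕ) : Matrix (Fin n ⊕ Fin n) (Fin n ⊕ Fin n) ℂ :=
  fromBlocks (jordanBlock lam n) 0 0 (jordanBlock lam⁻¹ n)

lemma exists_mul_self_eq_one_and_jordanPair_mul_mul_eq {lam : ℂ} (hlam : lam ≠ 0) :
    ∃ g, g * g = 1 ∧ jordanPair lam n * g * jordanPair lam n = g ∧ g.det = (-1) ^ n := by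
  obtain ⟨_, ⟨u, rfl⟩, hu⟩ := exists_isUnit_jordanBlock_mul_mul_jordanBlock_inv_eq (n := n) hlam
  have hu' := mul_inv_mul_eq_inv_of_mul_mul_eq (isUnit_jordanBlock hlam) hu
  refine ⟨fromBlocks 0 u ↑u⁻¹ 0, ?_, ?_, ?_⟩
  · simp [fromBlocks_multiply]
  · simp only [jordanPair, fromBlocks_multiply, mul_zero, zero_mul, add_zero, zero_add, hu, hu']
  · rw [det_fromBlocks_zero_zero, ← det_mul, Units.mul_inv, det_one, mul_one, Fintype.card_fin]

lemma det_eq_neg_one_pow_of_jordanPair_mul_mul_eq {lam : ℂ} (hlam1 : lam ≠ 1) (hlam2 : lam ≠ -1)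
    {M : Matrix (Fin n ⊕ Fin n) (Fin n ⊕ Fin n) ℂ} (hM2 : M * M = 1)
    (hM : jordanPair lam n * M * jordanPair lam n = M) : M.det = (-1) ^ n := by
  have hsq : lam * lam ≠ 1 := by rw [Ne, mul_self_eq_one_iff]; tauto
  have hsq' : lam⁻¹ * lam⁻¹ ≠ 1 := by rwa [← mul_inv, Ne, inv_eq_one]
  rw [← fromBlocks_toBlocks M] at hM2 hM ⊢
  simp only [jordanPair, fromBlocks_multiply, mul_zero, zero_mul, add_zero, zero_add,
    fromBlocks_inj] at hM
  rw [eq_zero_of_jordanBlock_mul_mul_jordanBlock_eq hsq hM.1,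
    eq_zero_of_jordanBlock_mul_mul_jordanBlock_eq hsq' hM.2.2.2] at hM2 ⊢
  simp only [fromBlocks_multiply, mul_zero, zero_mul, add_zero, zero_add, ← fromBlocks_one,
    fromBlocks_inj] at hM2
  rw [det_fromBlocks_zero_zero, ← det_mul, hM2.1, det_one, mul_one, Fintype.card_fin]

end JordanPair

open JordanPair in
theorem jordan_pair_reversible_and_strongly_reversible_iff_general {n : ℕ} (lam : ℂ)
    (hlam0 : lam ≠ 0) (hlam1 : lam ≠ 1) (hlam2 : lam ≠ -1)
    (hdet : (Matrix.fromBlocks (jordanBlock lam n) 0 0 (jordanBlock lam⁻¹ n)).det = 1)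
    (B : Matrix.SpecialLinearGroup (Fin n ⊕ Fin n) ℂ)
    (hB : B = ⟨Matrix.fromBlocks (jordanBlock lam n) 0 0 (jordanBlock lam⁻¹ n), hdet⟩) :
    (∃ g : Matrix.SpecialLinearGroup (Fin n ⊕ Fin n) ℂ, g * B * g⁻¹ = B⁻¹) ∧
    ((∃ g₁ g₂ : Matrix.SpecialLinearGroup (Fin n ⊕ Fin n) ℂ,
        g₁ * g₁ = 1 ∧ g₂ * g₂ = 1 ∧ B = g₁ * g₂) ↔ Even n) := by
  have hBm : (B : Matrix (Fin n ⊕ Fin n) (Fin n ⊕ Fin n) ℂ) = jordanPair lam n := by rw [hB]; rfl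
  obtain ⟨g, hg2, hBg, hgdet⟩ := exists_mul_self_eq_one_and_jordanPair_mul_mul_eq (n := n) hlam0
  rw [exists_mul_self_eq_one_and_eq_mul_iff]
  refine ⟨?_, ⟨?_, ?_⟩⟩
  · have hdetI : (Complex.I • g).det = 1 := by
      rw [det_smul, hgdet, Fintype.card_sum, Fintype.card_fin, ← two_mul, pow_mul, Complex.I_sq,
        ← mul_pow]
      norm_num
    have hBIg : (B : Matrix _ _ ℂ) * (Complex.I • g) * (B : Matrix _ _ ℂ) = Complex.I • g := by
      rw [hBm, mul_smul_comm, smul_mul_assoc, hBg]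
    exact ⟨⟨_, hdetI⟩, mul_mul_inv_eq_inv_of_mul_mul_eq (Subtype.val_injective hBIg)⟩
  · rintro ⟨h, hh2, hBh⟩
    have hdet' := det_eq_neg_one_pow_of_jordanPair_mul_mul_eq hlam1 hlam2
      (congrArg Subtype.val hh2) (hBm ▸ congrArg Subtype.val hBh)
    rwa [h.2, eq_comm, neg_one_pow_eq_one_iff_even (by norm_num)] at hdet'
  · intro he
    have hBgB : (B : Matrix _ _ ℂ) * g * (B : Matrix _ _ ℂ) = g := by rw [hBm, hBg]
    exact ⟨⟨g, by rw [hgdet, he.neg_one_pow]⟩, Subtype.val_injective hg2,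
      Subtype.val_injective hBgB⟩

/-- For `λ ∉ {0, 1, -1}` and `B = J(λ,n) ⊕ J(λ⁻¹,n) ∈ SL(2n, ℂ)` (block diagonal, realized
over the index type `Fin n ⊕ Fin n`): `B` is always reversible in `SL(2n, ℂ)`, and `B` is
strongly reversible in `SL(2n, ℂ)` iff `n` is even. -/
theorem jordan_pair_reversible_and_strongly_reversible_iff {n : ℕ} (hn : 1 ≤ n) (lam : ℂ)
    (hlam0 : lam ≠ 0) (hlam1 : lam ≠ 1) (hlam2 : lam ≠ -1)
    (hdet : (Matrix.fromBlocks (jordanBlock lam n) 0 0 (jordanBlock lam⁻¹ n)).det = 1)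
    (B : Matrix.SpecialLinearGroup (Fin n ⊕ Fin n) ℂ)
    (hB : B = ⟨Matrix.fromBlocks (jordanBlock lam n) 0 0 (jordanBlock lam⁻¹ n), hdet⟩) :
    (∃ g : Matrix.SpecialLinearGroup (Fin n ⊕ Fin n) ℂ, g * B * g⁻¹ = B⁻¹) ∧
    ((∃ g₁ g₂ : Matrix.SpecialLinearGroup (Fin n ⊕ Fin n) ℂ,
        g₁ * g₁ = 1 ∧ g₂ * g₂ = 1 ∧ B = g₁ * g₂) ↔ Even n) :=
  jordan_pair_reversible_and_strongly_reversible_iff_general lam hlam0 hlam1 hlam2 hdet B hB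
end

section
/- Let A ∈ SL(n,ℂ) be a semisimple (diagonalizable) element that is reversible in SL(n,ℂ). Then A is strongly reversible in SL(n,ℂ) (a product of two involutions of SL(n,ℂ)) if and only if 1 or −1 is an eigenvalue of A, or n ≢ 2 (mod 4). -/
/-!
Conjugate `A` to `D = diagonal d`. Writing `A = h * (h * A)`, strong reversibility means an
involution `h` of determinant one with `(h * D)² = 1`, i.e. `D * h * D = h`.

If no `d i` is `±1`, this forces `h` to have zero diagonal, so the involution `h` has trace `0`
and determinant `1`: its eigenvalues `±1` occur equally often, with an even number of `-1`s,
whence `4 ∣ n`.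

Conversely, reversibility makes the multiset of the `d i` stable under inversion, so some
involutive permutation `σ` pairs each `d i` with `(d i)⁻¹` and fixes every `i` with `d i = ±1`.
A signed permutation matrix of `σ` then does the job: if `σ` has a fixed point, a sign placed
there corrects the determinant; otherwise `σ` is a product of `n / 2` disjoint transpositions,
which is even when `n ≢ 2 (mod 4)`.
-/

open Function Matrix

theorem Multiset.prod_eq_neg_one_pow_count {R : Type*} [CommRing R] [DecidableEq R]
    {s : Multiset R} (hs : ∀ x ∈ s, x = 1 ∨ x = -1) : s.prod = (-1) ^ s.count (-1) := by
  induction s using Multiset.induction_on with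
  | empty => simp
  | cons a s ih =>
    rw [Multiset.prod_cons, ih fun x hx => hs x (Multiset.mem_cons_of_mem hx)]
    by_cases ha : a = -1
    · rw [ha, Multiset.count_cons_self, pow_succ, mul_comm]
    · rw [Multiset.count_cons_of_ne (Ne.symm ha),
        (hs a (Multiset.mem_cons_self a s)).resolve_right ha, one_mul]

theorem Multiset.sum_eq_card_sub_two_mul_count {R : Type*} [CommRing R] [DecidableEq R]
    {s : Multiset R} (hs : ∀ x ∈ s, x = 1 ∨ x = -1) :
    s.sum = Multiset.card s - 2 * s.count (-1) := by
  induction s using Multiset.induction_on with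
  | empty => simp
  | cons a s ih =>
    rw [Multiset.sum_cons, ih fun x hx => hs x (Multiset.mem_cons_of_mem hx), Multiset.card_cons]
    by_cases ha : a = -1
    · rw [ha, Multiset.count_cons_self]
      push_cast
      ring
    · rw [Multiset.count_cons_of_ne (Ne.symm ha),
        (hs a (Multiset.mem_cons_self a s)).resolve_right ha]
      push_cast
      ring

/-- `σ` sends the `k`-th element of the fibre of `d` over `b` to the `k`-th element of the fibre
over `τ b`, for some linear order on `ι`; since an order isomorphism between finite chains is
unique, `σ` is an involution and is the identity on fibres with `τ b = b`. -/
theorem Function.Involutive.exists_involutive_perm_of_map_eq {ι β : Type*} [Fintype ι]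
    {τ : β → β} (hτ : Involutive τ) (d : ι → β)
    (hd : Finset.univ.val.map d = Finset.univ.val.map (τ ∘ d)) :
    ∃ σ : Equiv.Perm ι, Involutive σ ∧ (∀ i, d (σ i) = τ (d i)) ∧
      ∀ i, τ (d i) = d i → σ i = i := by
  classical
  have hcard (b : β) : Fintype.card {i // d i = b} = Fintype.card {i // d i = τ b} := by
    have := congrArg (Multiset.count b) hd
    simp only [Multiset.count_map, Function.comp_apply] at this
    simp only [Fintype.card_subtype, Finset.card_def, Finset.filter_val]
    convert this using 2 <;> refine Multiset.filter_congr fun i _ => ?_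
    · exact eq_comm
    · rw [@eq_comm _ b, hτ.eq_iff]
  let : LinearOrder ι := LinearOrder.lift' _ (Fintype.equivFin ι).injective
  let ℓ (b : β) : {i // d i = b} ≃o {i // d i = τ b} :=
    (Fintype.orderIsoFinOfCardEq _ rfl).symm.trans (Fintype.orderIsoFinOfCardEq _ (hcard b).symm)
  have hrefl {b b' : β} (h : b = b') (e : {i // d i = b} ≃o {i // d i = b'}) (x) :
      (e x : ι) = x := by
    subst h
    rw [Subsingleton.elim e (OrderIso.refl _)]
    rfl
  have hcongr {b b' : β} (h : b = b') (x : {i // d i = b}) (x' : {i // d i = b'})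
      (hx : (x : ι) = x') : (ℓ b x : ι) = ℓ b' x' := by
    subst h
    rw [Subtype.ext hx]
  let σ (i : ι) : ι := ℓ (d i) ⟨i, rfl⟩
  have hσ : Involutive σ := fun i =>
    calc σ (σ i) = ((ℓ (d i)).trans (ℓ (τ (d i))) ⟨i, rfl⟩ : ι) :=
          hcongr (ℓ (d i) ⟨i, rfl⟩).2 _ _ rfl
      _ = i := hrefl (hτ _).symm _ _
  exact ⟨hσ.toPerm, hσ, fun i => (ℓ (d i) ⟨i, rfl⟩).2, fun i hi => hrefl hi.symm _ _⟩

theorem Equiv.Perm.sign_eq_one_of_involutive {ι : Type*} [Fintype ι] [DecidableEq ι]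
    {σ : Equiv.Perm ι} (hσ : Involutive σ) (hfree : ∀ i, σ i ≠ i)
    (hcard : Fintype.card ι % 4 ≠ 2) : Equiv.Perm.sign σ = 1 := by
  have hσ2 : σ ^ 2 = 1 := Equiv.ext hσ
  have hsupp : σ.support = Finset.univ :=
    Finset.eq_univ_of_forall fun i => by simpa using hfree i
  have heven : 2 ∣ Fintype.card ι := by simpa [hsupp] using two_dvd_card_support hσ2
  have hfix : Fintype.card (Function.fixedPoints σ) = 0 := by
    simp only [Fintype.card_eq_zero_iff, isEmpty_subtype]
    exact hfree
  rw [sign_of_pow_two_eq_one hσ2, hfix, Nat.sub_zero, Even.neg_one_pow]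
  exact Nat.even_iff.mpr (by omega)

namespace Matrix

variable {ι : Type*} [Fintype ι] [DecidableEq ι]

theorem eq_one_or_eq_neg_one_of_mem_roots_charpoly {K : Type*} [Field K] {h : Matrix ι ι K}
    (hh : h * h = 1) {μ : K} (hμ : μ ∈ h.charpoly.roots) : μ = 1 ∨ μ = -1 := by
  have hspec : μ ∈ spectrum K h :=
    mem_spectrum_iff_isRoot_charpoly.mpr (Polynomial.isRoot_of_mem_roots hμ)
  have : Nonempty ι := by
    by_contra hι
    simp [not_nonempty_iff.mp hι, charpoly_isEmpty] at hμ
  have hsq : μ * μ ∈ spectrum K (h * h) := by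
    simpa only [sq] using spectrum.pow_image_subset h 2 ⟨μ, hspec, rfl⟩
  rw [hh, spectrum.one_eq, Set.mem_singleton_iff] at hsq
  exact mul_self_eq_one_iff.mp hsq

theorem four_dvd_card_of_mul_self_eq_one {K : Type*} [Field K] [IsAlgClosed K] [CharZero K]
    {h : Matrix ι ι K} (hh : h * h = 1) (htr : h.trace = 0) (hdet : h.det = 1) :
    4 ∣ Fintype.card ι := by
  classical
  have hroots : ∀ μ ∈ h.charpoly.roots, μ = 1 ∨ μ = -1 := fun _ =>
    eq_one_or_eq_neg_one_of_mem_roots_charpoly hh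
  set q := h.charpoly.roots.count (-1)
  have hcard : Multiset.card h.charpoly.roots = Fintype.card ι := by
    rw [← (IsAlgClosed.splits h.charpoly).natDegree_eq_card_roots, charpoly_natDegree_eq_dim]
  have hsum : (Fintype.card ι : K) = 2 * q := by
    have := Multiset.sum_eq_card_sub_two_mul_count hroots
    rw [← trace_eq_sum_roots_charpoly, htr, hcard] at this
    linear_combination -this
  have hprod : (-1 : K) ^ q = 1 := by
    rw [← Multiset.prod_eq_neg_one_pow_count hroots, ← det_eq_prod_roots_charpoly, hdet]
  obtain ⟨k, hk⟩ := (neg_one_pow_eq_one_iff_even (by norm_num)).mp hprod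
  have : (Fintype.card ι : K) = (4 * k : ℕ) := by
    rw [hsum, hk]
    push_cast
    ring
  exact ⟨k, by exact_mod_cast this⟩

theorem roots_charpoly_diagonal {K : Type*} [Field K] (d : ι → K) :
    (diagonal d).charpoly.roots = Finset.univ.val.map d := by
  rw [charpoly_diagonal, Polynomial.roots_prod _ _ (Finset.prod_ne_zero_iff.mpr
    fun i _ => Polynomial.X_sub_C_ne_zero (d i))]
  simp

theorem charpoly_mul_mul_of_mul_eq_one {R : Type*} [CommRing R] {X Y : Matrix ι ι R}
    (h : Y * X = 1) (N : Matrix ι ι R) : (X * N * Y).charpoly = N.charpoly := by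
  rw [charpoly_mul_comm, ← Matrix.mul_assoc, h, Matrix.one_mul]

variable {R : Type*} [CommRing R]

theorem permMatrix_mul_diagonal (σ : Equiv.Perm ι) (v : ι → R) :
    σ.permMatrix R * diagonal v = diagonal (v ∘ σ) * σ.permMatrix R := by
  ext i j
  simp only [PEquiv.toMatrix_toPEquiv_mul, diagonal_mul, submatrix_apply, id, diagonal_apply]
  simp [PEquiv.toMatrix_apply]

theorem diagonal_mul_permMatrix_mul_diagonal_mul {σ : Equiv.Perm ι} (hσ : Involutive σ)
    (ε d : ι → R) :
    diagonal ε * σ.permMatrix R * diagonal d * (diagonal ε * σ.permMatrix R) =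
      diagonal fun i => ε i * ε (σ i) * d (σ i) := by
  have hσσ : σ * σ = 1 := Equiv.ext hσ
  calc _ = diagonal ε * (σ.permMatrix R * diagonal (fun i => d i * ε i)) * σ.permMatrix R := by
          rw [← diagonal_mul_diagonal d ε]
          simp only [Matrix.mul_assoc]
    _ = diagonal (fun i => ε i * (d (σ i) * ε (σ i))) * (σ * σ).permMatrix R := by
          rw [permMatrix_mul_diagonal, permMatrix_mul, ← Matrix.mul_assoc, ← Matrix.mul_assoc,
            diagonal_mul_diagonal]
          rfl
    _ = _ := by
          rw [hσσ, permMatrix_one, Matrix.mul_one]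
          congr
          ext
          ring

/-- `a = h * (h * a)` is then a product of the involutions `h` and `h * a`. -/
def IsSLStronglyReversible (a : Matrix ι ι R) : Prop :=
  ∃ h : Matrix ι ι R, h * h = 1 ∧ h.det = 1 ∧ h * a * (h * a) = 1

theorem IsSLStronglyReversible.units_conj {a : Matrix ι ι R} (ha : a.IsSLStronglyReversible)
    (P : (Matrix ι ι R)ˣ) : (P * a * P⁻¹ : Matrix ι ι R).IsSLStronglyReversible := by
  obtain ⟨h, hh, hdet, hha⟩ := ha
  have hconj (x y : Matrix ι ι R) : P * x * P⁻¹ * (P * y * P⁻¹) = P * (x * y) * P⁻¹ := by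
    simp only [Matrix.mul_assoc, Units.inv_mul_cancel_left]
  refine ⟨P * h * P⁻¹, ?_, by rw [det_units_conj, hdet], ?_⟩
  · rw [hconj, hh, Matrix.mul_one, Units.mul_inv]
  · rw [hconj, hconj, hha, Matrix.mul_one, Units.mul_inv]

theorem isSLStronglyReversible_units_conj_iff {a : Matrix ι ι R} (P : (Matrix ι ι R)ˣ) :
    (P * a * P⁻¹ : Matrix ι ι R).IsSLStronglyReversible ↔ a.IsSLStronglyReversible := by
  refine ⟨fun h => ?_, fun h => h.units_conj P⟩
  simpa only [inv_inv, Matrix.mul_assoc, Units.inv_mul_cancel_left, Units.inv_mul,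
    Matrix.mul_one] using h.units_conj P⁻¹

theorem isSLStronglyReversible_diagonal_of_perm {σ : Equiv.Perm ι} (hσ : Involutive σ)
    {d : ι → R} (hd : ∀ i, d (σ i) * d i = 1) {ε : ι → R} (hε : ∀ i, ε i * ε (σ i) = 1)
    (hdet : (∏ i, ε i) * Equiv.Perm.sign σ = 1) : (diagonal d).IsSLStronglyReversible := by
  refine ⟨diagonal ε * σ.permMatrix R, ?_, ?_, ?_⟩
  · simpa [hε] using diagonal_mul_permMatrix_mul_diagonal_mul hσ ε 1
  · rwa [det_mul, det_diagonal, det_permutation]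
  · rw [← Matrix.mul_assoc, diagonal_mul_permMatrix_mul_diagonal_mul hσ, diagonal_mul_diagonal]
    simp [hε, hd]

theorem isSLStronglyReversible_diagonal_of_involutive {σ : Equiv.Perm ι} (hσ : Involutive σ)
    {d : ι → R} (hd : ∀ i, d (σ i) * d i = 1)
    (hfix : (∃ i, σ i = i) ∨ Fintype.card ι % 4 ≠ 2) : (diagonal d).IsSLStronglyReversible := by
  by_cases hfixed : ∃ i, σ i = i
  · obtain ⟨i₀, hi₀⟩ := hfixed
    set s : R := ((Equiv.Perm.sign σ : ℤ) : R)
    have hs : s * s = 1 := by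
      rw [← Int.cast_mul, ← Units.val_mul, Int.units_mul_self, Units.val_one, Int.cast_one]
    refine isSLStronglyReversible_diagonal_of_perm hσ hd (ε := update 1 i₀ s) (fun i => ?_) ?_
    · by_cases hi : i = i₀
      · subst hi
        simp [hi₀, hs]
      · have : σ i ≠ i₀ := fun h => hi (hσ.injective (h.trans hi₀.symm))
        simp [hi, this]
    · rw [Finset.prod_update_of_mem (Finset.mem_univ _)]
      simpa using hs
  · have hfree : ∀ i, σ i ≠ i := by simpa using hfixed
    refine isSLStronglyReversible_diagonal_of_perm hσ hd (ε := 1) (by simp) ?_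
    simp [Equiv.Perm.sign_eq_one_of_involutive hσ hfree (hfix.resolve_left hfixed)]

theorem four_dvd_card_of_isSLStronglyReversible_diagonal {K : Type*} [Field K] [IsAlgClosed K]
    [CharZero K] {d : ι → K} (hrev : (diagonal d).IsSLStronglyReversible)
    (hd : ∀ i, d i * d i ≠ 1) : 4 ∣ Fintype.card ι := by
  obtain ⟨h, hh, hdet, hhd⟩ := hrev
  have hconj : diagonal d * h * diagonal d = h :=
    calc _ = h * h * (diagonal d * h * diagonal d) := by rw [hh, Matrix.one_mul]
      _ = h * (h * diagonal d * (h * diagonal d)) := by simp only [Matrix.mul_assoc]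
      _ = h := by rw [hhd, Matrix.mul_one]
  have hdiag (i : ι) : h i i = 0 := by
    have hii := congrFun (congrFun hconj i) i
    rw [mul_diagonal, diagonal_mul] at hii
    have : (d i * d i - 1) * h i i = 0 := by linear_combination hii
    exact (mul_eq_zero.mp this).resolve_left (sub_ne_zero.mpr (hd i))
  exact four_dvd_card_of_mul_self_eq_one hh (Finset.sum_eq_zero fun i _ => hdiag i) hdet

theorem isSLStronglyReversible_diagonal_iff {K : Type*} [Field K] [IsAlgClosed K] [CharZero K]
    {d : ι → K} (hd0 : ∀ i, d i ≠ 0)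
    (hrev : Finset.univ.val.map d = Finset.univ.val.map fun i => (d i)⁻¹) :
    (diagonal d).IsSLStronglyReversible ↔
      (∃ i, d i = 1 ∨ d i = -1) ∨ Fintype.card ι % 4 ≠ 2 := by
  constructor
  · refine fun h => or_iff_not_imp_left.mpr fun hd => ?_
    have := four_dvd_card_of_isSLStronglyReversible_diagonal h fun i hi =>
      hd ⟨i, mul_self_eq_one_iff.mp hi⟩
    omega
  · intro hcase
    obtain ⟨σ, hσ, hdσ, hfix⟩ := inv_involutive.exists_involutive_perm_of_map_eq d hrev
    refine isSLStronglyReversible_diagonal_of_involutive hσ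
      (fun i => by rw [hdσ, inv_mul_cancel₀ (hd0 i)]) (hcase.imp ?_ id)
    rintro ⟨i, hi | hi⟩ <;> exact ⟨i, hfix i (by simp [hi])⟩

end Matrix

namespace Matrix.SpecialLinearGroup

variable {ι : Type*} [Fintype ι] [DecidableEq ι]

theorem exists_involutions_eq_mul_iff {R : Type*} [CommRing R] (A : SpecialLinearGroup ι R) :
    (∃ g₁ g₂ : SpecialLinearGroup ι R, g₁ * g₁ = 1 ∧ g₂ * g₂ = 1 ∧ A = g₁ * g₂) ↔
      (A : Matrix ι ι R).IsSLStronglyReversible := by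
  constructor
  · rintro ⟨g₁, g₂, h₁, h₂, rfl⟩
    have h₁₂ : g₁ * (g₁ * g₂) = g₂ := by rw [← mul_assoc, h₁, one_mul]
    refine ⟨g₁, by rw [← coe_mul, h₁, coe_one], g₁.det_coe, ?_⟩
    rw [← coe_mul g₁, h₁₂, ← coe_mul, h₂, coe_one]
  · rintro ⟨h, hh, hdet, hhA⟩
    refine ⟨⟨h, hdet⟩, ⟨h, hdet⟩ * A, Subtype.ext hh, Subtype.ext hhA, Subtype.ext ?_⟩
    change (A : Matrix ι ι R) = h * (h * A)
    rw [← Matrix.mul_assoc, hh, Matrix.one_mul]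

variable {K : Type*} [Field K] {A : SpecialLinearGroup ι K} {P : (Matrix ι ι K)ˣ} {d : ι → K}

theorem units_conj_inv_eq_diagonal_inv (hP : P * (A : Matrix ι ι K) * P⁻¹ = diagonal d)
    (hd0 : ∀ i, d i ≠ 0) :
    P * ((A⁻¹ : SpecialLinearGroup ι K) : Matrix ι ι K) * P⁻¹ = diagonal fun i => (d i)⁻¹ := by
  refine (left_inv_eq_right_inv (a := diagonal d) ?_ ?_).symm
  · rw [diagonal_mul_diagonal]
    simp [inv_mul_cancel₀ (hd0 _)]
  · rw [← hP]
    simp only [Matrix.mul_assoc, Units.inv_mul_cancel_left]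
    rw [← Matrix.mul_assoc (A : Matrix ι ι K), ← coe_mul, mul_inv_cancel, coe_one,
      Matrix.one_mul, Units.mul_inv]

theorem map_eq_map_inv_of_conj_eq_inv (hP : P * (A : Matrix ι ι K) * P⁻¹ = diagonal d)
    (hd0 : ∀ i, d i ≠ 0) (hrev : ∃ g : SpecialLinearGroup ι K, g * A * g⁻¹ = A⁻¹) :
    Finset.univ.val.map d = Finset.univ.val.map fun i => (d i)⁻¹ := by
  obtain ⟨g, hg⟩ := hrev
  rw [← roots_charpoly_diagonal, ← roots_charpoly_diagonal, ← hP,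
    ← units_conj_inv_eq_diagonal_inv hP hd0, charpoly_mul_mul_of_mul_eq_one P.inv_mul,
    charpoly_mul_mul_of_mul_eq_one P.inv_mul, ← hg, coe_mul, coe_mul,
    charpoly_mul_mul_of_mul_eq_one (by rw [← coe_mul, inv_mul_cancel, coe_one])]

end Matrix.SpecialLinearGroup

theorem semisimple_strongly_reversible_iff_general {n : ℕ}
    (A : Matrix.SpecialLinearGroup (Fin n) ℂ)
    (hss : ∃ (P : (Matrix (Fin n) (Fin n) ℂ)ˣ) (d : Fin n → ℂ),
      (P : Matrix (Fin n) (Fin n) ℂ) * (A : Matrix (Fin n) (Fin n) ℂ) *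
        ((P⁻¹ : (Matrix (Fin n) (Fin n) ℂ)ˣ) : Matrix (Fin n) (Fin n) ℂ) = Matrix.diagonal d)
    (hrev : ∃ g : Matrix.SpecialLinearGroup (Fin n) ℂ, g * A * g⁻¹ = A⁻¹) :
    (∃ g₁ g₂ : Matrix.SpecialLinearGroup (Fin n) ℂ,
        g₁ * g₁ = 1 ∧ g₂ * g₂ = 1 ∧ A = g₁ * g₂) ↔
      ((1 : ℂ) ∈ spectrum ℂ (A : Matrix (Fin n) (Fin n) ℂ) ∨
        (-1 : ℂ) ∈ spectrum ℂ (A : Matrix (Fin n) (Fin n) ℂ) ∨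
        n % 4 ≠ 2) := by
  obtain ⟨P, d, hP⟩ := hss
  have hd0 (i : Fin n) : d i ≠ 0 := by
    have hdet : ∏ i, d i = 1 := by rw [← det_diagonal, ← hP, det_units_conj, A.det_coe]
    exact Finset.prod_ne_zero_iff.mp (hdet ▸ one_ne_zero) i (Finset.mem_univ i)
  have hspec : spectrum ℂ (A : Matrix (Fin n) (Fin n) ℂ) = Set.range d := by
    rw [← spectrum.units_conjugate (u := P), hP, spectrum_diagonal]
  rw [SpecialLinearGroup.exists_involutions_eq_mul_iff, ← isSLStronglyReversible_units_conj_iff P,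
    hP, isSLStronglyReversible_diagonal_iff hd0
      (SpecialLinearGroup.map_eq_map_inv_of_conj_eq_inv hP hd0 hrev),
    hspec, Fintype.card_fin, Set.mem_range, Set.mem_range, exists_or, or_assoc]

/-- A reversible semisimple (diagonalizable) element `A ∈ SL(n, ℂ)` is strongly reversible in
`SL(n, ℂ)` iff `1` or `-1` is an eigenvalue of `A`, or `n ≢ 2 (mod 4)`. -/
theorem semisimple_strongly_reversible_iff {n : ℕ} (hn : 1 ≤ n)
    (A : Matrix.SpecialLinearGroup (Fin n) ℂ)
    (hss : ∃ (P : (Matrix (Fin n) (Fin n) ℂ)ˣ) (d : Fin n → ℂ),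
      (P : Matrix (Fin n) (Fin n) ℂ) * (A : Matrix (Fin n) (Fin n) ℂ) *
        ((P⁻¹ : (Matrix (Fin n) (Fin n) ℂ)ˣ) : Matrix (Fin n) (Fin n) ℂ) = Matrix.diagonal d)
    (hrev : ∃ g : Matrix.SpecialLinearGroup (Fin n) ℂ, g * A * g⁻¹ = A⁻¹) :
    (∃ g₁ g₂ : Matrix.SpecialLinearGroup (Fin n) ℂ,
        g₁ * g₁ = 1 ∧ g₂ * g₂ = 1 ∧ A = g₁ * g₂) ↔
      ((1 : ℂ) ∈ spectrum ℂ (A : Matrix (Fin n) (Fin n) ℂ) ∨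
        (-1 : ℂ) ∈ spectrum ℂ (A : Matrix (Fin n) (Fin n) ℂ) ∨
        n % 4 ≠ 2) :=
  semisimple_strongly_reversible_iff_general A hss hrev
end
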